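/- arXiv:2302.01868 — 5 statements merged into one kernel-verified Lean document; each statement's English description precedes it below -/
import Mathlib

section
/- Let A be an associative unital algebra over a field K, I a two-sided ideal of A, and G a subgroup of the group of units of A contained in 1 + I. Define I^(0) = I and I^(n+1) = [I^(n), I^(n)]·A (the ideal generated by Lie brackets of elements of I^(n) multiplied by A). Then for every n, the n-th term of the derived series of G is contained in 1 + I^(n). -/
/-- The span of Lie brackets `[u,v] = u*v - v*u` with `u ∈ U`, `v ∈ V`. -/
def lieBracketSpan (K : Type*) {A : Type*} [Field K] [Ring A] [Algebra K A]
    (U V : Submodule K A) : Submodule K A :=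
  Submodule.span K {z | ∃ u ∈ U, ∃ v ∈ V, z = u * v - v * u}

/-- The span of products `u * a` with `u ∈ U`, `a ∈ A`. -/
def mulASpan (K : Type*) {A : Type*} [Field K] [Ring A] [Algebra K A]
    (U : Submodule K A) : Submodule K A :=
  Submodule.span K {z | ∃ u ∈ U, ∃ a : A, z = u * a}

/-- The strong Lie derived series `I⁽⁰⁾ = I`, `I⁽ⁿ⁺¹⁾ = [I⁽ⁿ⁾, I⁽ⁿ⁾]·A`. -/
def strongDerivedSeries (K : Type*) {A : Type*} [Field K] [Ring A] [Algebra K A]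
    (I : Submodule K A) : ℕ → Submodule K A
  | 0 => I
  | n + 1 =>
      mulASpan K (lieBracketSpan K (strongDerivedSeries K I n) (strongDerivedSeries K I n))

lemma mulASpan_mul_mem {K A : Type*} [Field K] [Ring A] [Algebra K A]
    (U : Submodule K A) {x : A} (hx : x ∈ mulASpan K U) (a : A) :
    x * a ∈ mulASpan K U := by
  induction hx using Submodule.span_induction with
  | mem z hz =>
      obtain ⟨u, hu, b, rfl⟩ := hz
      exact Submodule.subset_span ⟨u, hu, b * a, by rw [mul_assoc]⟩
  | zero => simpa using (mulASpan K U).zero_mem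
  | add x y _ _ hx hy => simpa [add_mul] using (mulASpan K U).add_mem hx hy
  | smul c x _ hx => simpa [smul_mul_assoc] using (mulASpan K U).smul_mem c hx

lemma strongDerivedSeries_mul_mem {K A : Type*} [Field K] [Ring A] [Algebra K A]
    (I : Submodule K A) (hI : ∀ a : A, ∀ x ∈ I, a * x ∈ I ∧ x * a ∈ I) (n : ℕ)
    {x : A} (hx : x ∈ strongDerivedSeries K I n) (a : A) :
    x * a ∈ strongDerivedSeries K I n := by
  cases n with
  | zero => exact (hI a x hx).2
  | succ n => exact mulASpan_mul_mem _ hx a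

open scoped commutatorElement

/-- if `G` is a subgroup of the units of `A` contained in `1 + I`, where `I` is a
two-sided ideal of `A`, then `G⁽ⁿ⁾ ⊆ 1 + I⁽ⁿ⁾`. -/
theorem derivedSeries_subset_one_add_strongDerivedSeries
    {K A : Type*} [Field K] [Ring A] [Algebra K A]
    (I : Submodule K A) (hI : ∀ a : A, ∀ x ∈ I, a * x ∈ I ∧ x * a ∈ I)
    (G : Subgroup Aˣ) (hG : ∀ g ∈ G, ((g : Aˣ) : A) - 1 ∈ I) (n : ℕ) :
    ∀ g ∈ derivedSeries G n, (((g : G) : Aˣ) : A) - 1 ∈ strongDerivedSeries K I n := by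
  induction n with
  | zero => intro g _; exact hG g g.2
  | succ n ih =>
    set J : Submodule K A := strongDerivedSeries K I (n + 1) with hJdef
    have hJmul : ∀ {x : A}, x ∈ J → ∀ a : A, x * a ∈ J :=
      fun hx a => strongDerivedSeries_mul_mem I hI (n + 1) hx a
    let H : Subgroup G :=
      { carrier := {g : G | ((g : Aˣ) : A) - 1 ∈ J}
        one_mem' := by simpa using J.zero_mem
        mul_mem' := by
          intro a b ha hb
          have key : (((a * b : G) : Aˣ) : A) - 1 =
              (((a : Aˣ) : A) - 1) * ((b : Aˣ) : A) + (((b : Aˣ) : A) - 1) := by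
            push_cast
            noncomm_ring
          show (((a * b : G) : Aˣ) : A) - 1 ∈ J
          rw [key]
          exact J.add_mem (hJmul ha _) hb
        inv_mem' := by
          intro a ha
          have key : (((a⁻¹ : G) : Aˣ) : A) - 1 =
              -((((a : Aˣ) : A) - 1) * (((a : Aˣ)⁻¹ : Aˣ) : A)) := by
            push_cast
            rw [sub_mul, one_mul, Units.mul_inv, neg_sub]
          show (((a⁻¹ : G) : Aˣ) : A) - 1 ∈ J
          rw [key]
          exact J.neg_mem (hJmul ha _) }
    have hle : derivedSeries G (n + 1) ≤ H := by
      rw [derivedSeries_succ]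
      refine Subgroup.commutator_le.2 fun g hg h hh => ?_
      have hbr : ((g : Aˣ) : A) * ((h : Aˣ) : A) - ((h : Aˣ) : A) * ((g : Aˣ) : A) ∈
          lieBracketSpan K (strongDerivedSeries K I n) (strongDerivedSeries K I n) :=
        Submodule.subset_span ⟨_, ih g hg, _, ih h hh, by noncomm_ring⟩
      have key : (((⁅g, h⁆ : G) : Aˣ) : A) - 1 =
          (((g : Aˣ) : A) * ((h : Aˣ) : A) - ((h : Aˣ) : A) * ((g : Aˣ) : A)) *
            ((((g : Aˣ)⁻¹ : Aˣ) : A) * (((h : Aˣ)⁻¹ : Aˣ) : A)) := by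
        simp [commutatorElement_def, sub_mul, mul_assoc, Units.mul_inv_cancel_left,
          Units.mul_inv]
      show ((( ⁅g, h⁆ : G) : Aˣ) : A) - 1 ∈ J
      rw [key, hJdef]
      exact Submodule.subset_span ⟨_, hbr, _, rfl⟩
    intro g hg
    exact hle hg
end

section
/- Let X be a locally finite poset containing a chain x_1 < x_2 < ... < x_k, and K a field. Then the incidence algebra I(X,K) satisfies no multilinear polynomial identity of degree 2k - 1 with nonzero coefficient on the identity permutation. Equivalently, evaluating a multilinear polynomial f(χ_1,...,χ_{2k-1}) = Σ_σ c_σ χ_{σ(1)}···χ_{σ(2k-1)} with c_1 ≠ 0 at the elements e_{x_1 x_1}, e_{x_1 x_2}, e_{x_2 x_2}, ..., e_{x_{k-1} x_k}, e_{x_k x_k} gives c_1·e_{x_1 x_k} ≠ 0. -/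
open IncidenceAlgebra

variable {K : Type*} [Field K] {X : Type*} [PartialOrder X] [LocallyFiniteOrder X] [DecidableEq X]

/-- The length `l(x,y)` of the interval `[x,y]`: the supremum of `|C| - 1` over finite chains
`C ⊆ [x,y]`. -/
noncomputable def intervalLength (x y : X) : ℕ∞ := (Set.Icc x y).chainHeight (· < ·) - 1

/-- `Z_k`: the set of elements `α` of the incidence algebra with `α x y = 0` whenever
`l(x,y) ≤ k - 1`. -/
def zSet (K : Type*) [Field K] (X : Type*) [PartialOrder X] [LocallyFiniteOrder X]
    [DecidableEq X] (k : ℕ) : Set (IncidenceAlgebra K X) :=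
  {f | ∀ x y : X, x ≤ y → intervalLength x y ≤ (k : ℕ∞) - 1 → f x y = 0}


/-- The "matrix unit" `e_{xy}` of the incidence algebra: value `1` at `(x,y)` and `0`
elsewhere. -/
def eSingle (K : Type*) [Field K] {X : Type*} [PartialOrder X]
    [LocallyFiniteOrder X] [DecidableEq X] (x y : X) (hxy : x ≤ y) : IncidenceAlgebra K X :=
  ⟨fun a b => if a = x ∧ b = y then 1 else 0, fun a b hab => by
    split_ifs with h'
    · obtain ⟨rfl, rfl⟩ := h'
      exact absurd hxy hab
    · rfl⟩


lemma eSingle_apply (x y : X) (h : x ≤ y) (a b : X) :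
    eSingle K x y h a b = if a = x ∧ b = y then 1 else 0 := rfl

lemma eSingle_congr {x x' y y' : X} {h : x ≤ y} {h' : x' ≤ y'} (hx : x = x') (hy : y = y') :
    eSingle K x y h = eSingle K x' y' h' := by subst hx; subst hy; rfl

lemma eSingle_mul_eSingle {x y z w : X} (h1 : x ≤ y) (h2 : z ≤ w) (hyz : y = z) (hxw : x ≤ w) :
    eSingle K x y h1 * eSingle K z w h2 = eSingle K x w hxw := by
  subst hyz
  ext a b hab
  rw [IncidenceAlgebra.mul_apply]
  simp only [eSingle_apply]
  by_cases hh : a = x ∧ b = w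
  · obtain ⟨rfl, rfl⟩ := hh
    rw [Finset.sum_eq_single_of_mem y (Finset.mem_Icc.2 ⟨h1, h2⟩)]
    · simp
    · intro t _ ht
      simp [ht]
  · rw [if_neg hh, Finset.sum_eq_zero]
    intro t _
    rcases not_and_or.1 hh with h' | h' <;> simp [h']

lemma eSingle_mul_eSingle_ne {x y z w : X} (h1 : x ≤ y) (h2 : z ≤ w) (hyz : y ≠ z) :
    eSingle K x y h1 * eSingle K z w h2 = 0 := by
  ext a b hab
  rw [IncidenceAlgebra.mul_apply]
  have : ((0 : IncidenceAlgebra K X) : X → X → K) a b = 0 := rfl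
  rw [this, Finset.sum_eq_zero]
  intro t _
  simp only [eSingle_apply]
  by_cases ht : t = y
  · subst ht
    have : ¬(t = z ∧ b = w) := fun hh => hyz hh.1
    simp [this]
  · simp [ht]

lemma prod_chain : ∀ (n : ℕ) (hn : 0 < n) (p q : Fin n → X) (h : ∀ i, p i ≤ q i),
    (∀ (j : ℕ) (hj : j + 1 < n), q ⟨j, by omega⟩ = p ⟨j + 1, hj⟩) →
    ∃ hpq : p ⟨0, hn⟩ ≤ q ⟨n - 1, Nat.sub_lt hn Nat.one_pos⟩,
      (List.ofFn fun i => eSingle K (p i) (q i) (h i)).prod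
        = eSingle K (p ⟨0, hn⟩) (q ⟨n - 1, Nat.sub_lt hn Nat.one_pos⟩) hpq := by
  intro n
  induction n with
  | zero => omega
  | succ n ih =>
    intro _ p q h hch
    rw [List.ofFn_succ, List.prod_cons]
    rcases Nat.eq_zero_or_pos n with rfl | hn
    · refine ⟨h 0, ?_⟩
      rw [List.ofFn_zero, List.prod_nil, mul_one]
      rfl
    · obtain ⟨hpq', heq⟩ := ih hn (fun i => p i.succ) (fun i => q i.succ) (fun i => h i.succ)
        (fun j hj => hch (j + 1) (by omega))
      rw [heq]
      have hch0 : q 0 = p (Fin.succ ⟨0, hn⟩) := hch 0 (by omega)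
      have hle : p 0 ≤ q (Fin.succ ⟨n - 1, Nat.sub_lt hn Nat.one_pos⟩) := le_trans (h 0) (hch0 ▸ hpq')
      refine ⟨?_, ?_⟩
      · convert hle using 2
        all_goals exact Fin.ext (by simp <;> omega)
      · rw [eSingle_mul_eSingle (h 0) _ hch0 hle]
        exact eSingle_congr rfl (congrArg q (Fin.ext (by simp; omega)))

lemma prod_zero : ∀ (n : ℕ) (p q : Fin n → X) (h : ∀ i, p i ≤ q i) (j : ℕ) (hj : j + 1 < n),
    q ⟨j, by omega⟩ ≠ p ⟨j + 1, hj⟩ →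
    (List.ofFn fun i => eSingle K (p i) (q i) (h i)).prod = 0 := by
  intro n
  induction n with
  | zero => omega
  | succ n ih =>
    intro p q h j hj hbad
    rw [List.ofFn_succ, List.prod_cons]
    rcases j with _ | j'
    · have hn : 0 < n := by omega
      by_cases hall : ∀ (i : ℕ) (hi : i + 1 < n),
          q (Fin.succ ⟨i, by omega⟩) = p (Fin.succ ⟨i + 1, hi⟩)
      · obtain ⟨hpq', heq⟩ := prod_chain (K := K) n hn (fun i => p i.succ) (fun i => q i.succ)
          (fun i => h i.succ) hall
        rw [heq]
        exact eSingle_mul_eSingle_ne _ _ hbad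
      · push_neg at hall
        obtain ⟨i, hi, hbad'⟩ := hall
        rw [ih (fun i => p i.succ) (fun i => q i.succ) (fun i => h i.succ) i hi hbad', mul_zero]
    · have hj' : j' + 1 < n := by omega
      have hbad' : q (Fin.succ ⟨j', by omega⟩) ≠ p (Fin.succ ⟨j' + 1, hj'⟩) := hbad
      rw [ih (fun i => p i.succ) (fun i => q i.succ) (fun i => h i.succ) j' hj' hbad', mul_zero]

lemma perm_eq_one (n : ℕ) (σ : Equiv.Perm (Fin n))
    (h : ∀ (j : ℕ) (hj : j + 1 < n),
      (((σ ⟨j, by omega⟩ : Fin n) : ℕ) + 1) / 2 = ((σ ⟨j + 1, hj⟩ : Fin n) : ℕ) / 2) : σ = 1 := by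
  have key : ∀ (j : ℕ) (hj : j < n), j ≤ ((σ ⟨j, hj⟩ : Fin n) : ℕ) := by
    intro j
    induction j with
    | zero => simp
    | succ j ihj =>
      intro hj
      have hj' : j < n := by omega
      have h1 := ihj hj'
      have h2 := h j hj
      have hne : ((σ ⟨j, hj'⟩ : Fin n) : ℕ) ≠ ((σ ⟨j + 1, hj⟩ : Fin n) : ℕ) := by
        intro he
        have := σ.injective (Fin.val_injective he)
        have := congrArg Fin.val this
        simp at this
      omega
  have hle : ∀ i : Fin n, i ∈ Finset.univ → (i : ℕ) ≤ ((σ i : Fin n) : ℕ) := fun i _ => key i.1 i.2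
  have hsum : ∑ i : Fin n, ((i : ℕ)) = ∑ i : Fin n, ((σ i : Fin n) : ℕ) :=
    (Equiv.sum_comp σ (fun i : Fin n => (i : ℕ))).symm
  have heach := (Finset.sum_eq_sum_iff_of_le hle).1 hsum
  have hall : ∀ i : Fin n, σ i = i := fun i => Fin.val_injective ((heach i (Finset.mem_univ i)).symm)
  exact Equiv.ext fun i => (hall i).trans (Equiv.Perm.one_apply i).symm

/-- if `X` contains a chain `x₁ < ⋯ < x_k` then evaluating a multilinear
polynomial `∑_σ c_σ χ_{σ(1)} ⋯ χ_{σ(2k-1)}` with `c₁ ≠ 0` at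
`e_{x₁x₁}, e_{x₁x₂}, e_{x₂x₂}, …, e_{x_{k-1}x_k}, e_{x_kx_k}` gives `c₁ • e_{x₁x_k} ≠ 0`. -/
theorem eval_multilinear_eq_single (k : ℕ) (hk : 0 < k) (c : Fin k → X) (hc : StrictMono c)
    (coef : Equiv.Perm (Fin (2 * k - 1)) → K) (h1 : coef 1 ≠ 0) :
    (∑ σ : Equiv.Perm (Fin (2 * k - 1)), coef σ •
        (List.ofFn fun i : Fin (2 * k - 1) =>
          eSingle K (c ⟨((σ i : Fin (2 * k - 1)) : ℕ) / 2, by have := (σ i).2; omega⟩)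
            (c ⟨(((σ i : Fin (2 * k - 1)) : ℕ) + 1) / 2, by have := (σ i).2; omega⟩)
            (hc.monotone (by simp only [Fin.mk_le_mk]; omega))).prod)
      = coef 1 • eSingle K (c ⟨0, hk⟩) (c ⟨k - 1, by omega⟩)
          (hc.monotone (by simp only [Fin.mk_le_mk]; omega)) ∧
    coef 1 • eSingle K (c ⟨0, hk⟩) (c ⟨k - 1, by omega⟩)
        (hc.monotone (by simp only [Fin.mk_le_mk]; omega)) ≠ 0 := by
  have hn : 0 < 2 * k - 1 := by omega
  have main : ∀ σ : Equiv.Perm (Fin (2 * k - 1)),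
      (List.ofFn fun i : Fin (2 * k - 1) =>
          eSingle K (c ⟨((σ i : Fin (2 * k - 1)) : ℕ) / 2, by have := (σ i).2; omega⟩)
            (c ⟨(((σ i : Fin (2 * k - 1)) : ℕ) + 1) / 2, by have := (σ i).2; omega⟩)
            (hc.monotone (by simp only [Fin.mk_le_mk]; omega))).prod
        = if σ = 1 then eSingle K (c ⟨0, hk⟩) (c ⟨k - 1, by omega⟩)
            (hc.monotone (by simp only [Fin.mk_le_mk]; omega)) else 0 := by
    intro σ
    rcases eq_or_ne σ 1 with hσ | hσ
    · rw [if_pos hσ]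
      obtain ⟨hpq, heq⟩ := prod_chain (K := K) (2 * k - 1) hn
        (fun i => c ⟨((σ i : Fin (2 * k - 1)) : ℕ) / 2, by have := (σ i).2; omega⟩)
        (fun i => c ⟨(((σ i : Fin (2 * k - 1)) : ℕ) + 1) / 2, by have := (σ i).2; omega⟩)
        (fun i => hc.monotone (by simp only [Fin.mk_le_mk]; omega))
        (fun j hj => congrArg c (Fin.ext (by
          simp only [hσ, Equiv.Perm.one_apply])))
      rw [heq]
      exact eSingle_congr
        (congrArg c (Fin.ext (by simp only [hσ, Equiv.Perm.one_apply])))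
        (congrArg c (Fin.ext (by simp only [hσ, Equiv.Perm.one_apply]; omega)))
    · rw [if_neg hσ]
      by_cases hall : ∀ (j : ℕ) (hj : j + 1 < 2 * k - 1),
          (((σ ⟨j, by omega⟩ : Fin (2 * k - 1)) : ℕ) + 1) / 2
            = ((σ ⟨j + 1, hj⟩ : Fin (2 * k - 1)) : ℕ) / 2
      · exact absurd (perm_eq_one (2 * k - 1) σ hall) hσ
      · push_neg at hall
        obtain ⟨j, hj, hbadnat⟩ := hall
        refine prod_zero (K := K) (2 * k - 1)
          (fun i => c ⟨((σ i : Fin (2 * k - 1)) : ℕ) / 2, by have := (σ i).2; omega⟩)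
          (fun i => c ⟨(((σ i : Fin (2 * k - 1)) : ℕ) + 1) / 2, by have := (σ i).2; omega⟩)
          (fun i => hc.monotone (by simp only [Fin.mk_le_mk]; omega)) j hj ?_
        intro he
        exact hbadnat (congrArg Fin.val (hc.injective he))
  constructor
  · trans (∑ σ : Equiv.Perm (Fin (2 * k - 1)),
        if σ = 1 then coef σ • eSingle K (c ⟨0, hk⟩) (c ⟨k - 1, by omega⟩)
          (hc.monotone (by simp only [Fin.mk_le_mk]; omega)) else 0)
    · refine Finset.sum_congr rfl fun σ _ => ?_
      rcases eq_or_ne σ 1 with hσ | hσ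
      · rw [if_pos hσ]
        exact congrArg (fun x => coef σ • x) ((main σ).trans (if_pos hσ))
      · rw [if_neg hσ]
        exact (congrArg (fun x => coef σ • x) ((main σ).trans (if_neg hσ))).trans (smul_zero _)
    · simp
  · intro h0
    apply h1
    have h2 := congrFun (DFunLike.congr_fun h0 (c ⟨0, hk⟩)) (c ⟨k - 1, by omega⟩)
    simpa [IncidenceAlgebra.constSMul_apply, eSingle_apply] using h2
end

section
/- Let X be a locally finite poset and K a field. Then the group of units of the incidence algebra I(X,K) is solvable if and only if X is bounded. -/
open IncidenceAlgebra

variable {K : Type*} [Field K] {X : Type*} [PartialOrder X] [LocallyFiniteOrder X] [DecidableEq X]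

set_option linter.unusedSectionVars false
set_option linter.unusedVariables false

open scoped commutatorElement

lemma chainHeight_insert_le' (z : X) (s : Set X) :
    (insert z s).chainHeight (· < ·) ≤ s.chainHeight (· < ·) + 1 := by
  rw [Set.chainHeight_eq_iSup]
  refine iSup_le fun c => ?_
  have hsub : c.1 \ {z} ⊆ s := fun a ha => by
    rcases c.2.1 ha.1 with h | h
    · exact absurd h ha.2
    · exact h
  have hle := Set.encard_le_chainHeight_of_isChain _ _ hsub (c.2.2.mono Set.diff_subset)
  by_cases hz : z ∈ c.1
  · rw [← Set.encard_sdiff_singleton_add_one hz]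
    exact add_le_add hle le_rfl
  · rw [Set.diff_singleton_eq_self hz] at hle
    exact hle.trans le_self_add

lemma chainHeight_add_le_union' (s t : Set X) (h : ∀ a ∈ s, ∀ b ∈ t, a < b) :
    s.chainHeight (· < ·) + t.chainHeight (· < ·) ≤ (s ∪ t).chainHeight (· < ·) := by
  have : Nonempty { u : Set X // u ⊆ s ∧ IsChain (· < ·) u } := ⟨⟨∅, by simp⟩⟩
  have : Nonempty { u : Set X // u ⊆ t ∧ IsChain (· < ·) u } := ⟨⟨∅, by simp⟩⟩
  rw [Set.chainHeight_eq_iSup, Set.chainHeight_eq_iSup]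
  refine ENat.iSup_add_iSup_le fun a b => ?_
  have hd : Disjoint a.1 b.1 := Set.disjoint_left.2 fun x hxa hxb =>
    lt_irrefl x (h x (a.2.1 hxa) x (b.2.1 hxb))
  rw [← Set.encard_union_eq hd]
  refine Set.encard_le_chainHeight_of_isChain _ _ (Set.union_subset_union a.2.1 b.2.1) ?_
  intro x hx y hy hne
  rcases hx with hx | hx <;> rcases hy with hy | hy
  · exact a.2.2 hx hy hne
  · exact Or.inl (h x (a.2.1 hx) y (b.2.1 hy))
  · exact Or.inr (h y (a.2.1 hy) x (b.2.1 hx))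
  · exact b.2.2 hx hy hne

/-! ### Auxiliary lemmas about `intervalLength` -/

lemma intervalLength_mono_left {x z y : X} (hxz : x ≤ z) (hzy : z ≤ y) :
    intervalLength x z ≤ intervalLength x y :=
  tsub_le_tsub_right (Set.chainHeight_mono _ _ _ (Set.Icc_subset_Icc_right hzy)) 1

lemma intervalLength_mono_right {x z y : X} (hxz : x ≤ z) (hzy : z ≤ y) :
    intervalLength z y ≤ intervalLength x y :=
  tsub_le_tsub_right (Set.chainHeight_mono _ _ _ (Set.Icc_subset_Icc_left hxz)) 1

lemma one_le_intervalLength {x y : X} (h : x < y) : 1 ≤ intervalLength x y := by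
  have h2 : ((2 : ℕ) : ℕ∞) ≤ (Set.Icc x y).chainHeight (· < ·) := by
    have hc : IsChain (· < ·) ({x, y} : Set X) := by
      intro a ha b hb hab
      simp only [Set.mem_insert_iff, Set.mem_singleton_iff] at ha hb
      rcases ha with rfl | rfl <;> rcases hb with rfl | rfl <;> simp_all
    have := Set.encard_le_chainHeight_of_isChain (r := (· < ·)) _ _ (by
      intro a ha
      simp only [Set.mem_insert_iff, Set.mem_singleton_iff] at ha
      rcases ha with rfl | rfl
      · exact Set.mem_Icc.2 ⟨le_rfl, h.le⟩
      · exact Set.mem_Icc.2 ⟨h.le, le_rfl⟩) hc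
    simpa [Set.encard_pair h.ne] using this
  unfold intervalLength
  refine ENat.le_sub_of_add_le_left (by simp) ?_
  simpa [one_add_one_eq_two] using h2

lemma eq_of_intervalLength_le_zero {x y : X} (hxy : x ≤ y)
    (h : intervalLength x y ≤ 0) : x = y := by
  by_contra hne
  have := one_le_intervalLength (lt_of_le_of_ne hxy hne)
  exact absurd (this.trans h) (by norm_num)

/-- Superadditivity of interval length. -/
lemma intervalLength_add_le {x z y : X} (hxz : x ≤ z) (hzy : z ≤ y) :
    intervalLength x z + intervalLength z y ≤ intervalLength x y := by
  set s := Set.Icc x z with hs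
  set t := Set.Icc z y with ht
  set s' := s \ {z} with hs'
  have hzt : z ∈ t := Set.mem_Icc.2 ⟨le_rfl, hzy⟩
  have ht1 : 1 ≤ t.chainHeight (· < ·) := (Set.one_le_chainHeight_iff _ _).2 ⟨z, hzt⟩
  have hlt : ∀ a ∈ s', ∀ b ∈ t, a < b := by
    rintro a ⟨ha, haz⟩ b hb
    exact lt_of_lt_of_le (lt_of_le_of_ne (Set.mem_Icc.1 ha).2 haz) (Set.mem_Icc.1 hb).1
  have hunion : s'.chainHeight (· < ·) + t.chainHeight (· < ·) ≤ (s' ∪ t).chainHeight (· < ·) :=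
    chainHeight_add_le_union' _ _ hlt
  have hsub : s' ∪ t ⊆ Set.Icc x y := by
    rintro a (⟨ha, -⟩ | ha) <;> rw [Set.mem_Icc] at *
    · exact ⟨ha.1, ha.2.trans hzy⟩
    · exact ⟨hxz.trans ha.1, ha.2⟩
  have hins : (insert z s').chainHeight (· < ·) ≤ s'.chainHeight (· < ·) + 1 :=
    chainHeight_insert_le' _ _
  have hsle : s.chainHeight (· < ·) ≤ s'.chainHeight (· < ·) + 1 := by
    refine le_trans ?_ hins
    exact Set.chainHeight_mono _ _ _ fun a ha => by
      rcases eq_or_ne a z with rfl | hne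
      · exact Set.mem_insert _ _
      · exact Set.mem_insert_of_mem _ ⟨ha, hne⟩
  have h1 : intervalLength x z ≤ s'.chainHeight (· < ·) := by
    unfold intervalLength
    rw [← hs]
    exact tsub_le_iff_right.2 hsle
  calc intervalLength x z + intervalLength z y
      ≤ s'.chainHeight (· < ·) + (t.chainHeight (· < ·) - 1) := add_le_add h1 le_rfl
    _ = s'.chainHeight (· < ·) + t.chainHeight (· < ·) - 1 := by
        generalize s'.chainHeight (· < ·) = a
        generalize ht : t.chainHeight (· < ·) = b
        rw [ht] at ht1
        induction b with
        | top => simp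
        | coe n =>
          induction a with
          | top => simp
          | coe m =>
            have hn : 1 ≤ n := by exact_mod_cast ht1
            rw [← Nat.cast_one, ← ENat.coe_sub, ← ENat.coe_add, ← ENat.coe_add, ← ENat.coe_sub]
            norm_cast
            omega
    _ ≤ (Set.Icc x y).chainHeight (· < ·) - 1 := by
        exact le_trans (tsub_le_tsub_right hunion 1)
          (tsub_le_tsub_right (Set.chainHeight_mono _ _ _ hsub) 1)
    _ = intervalLength x y := rfl

/-! ### `zSet` closure lemmas -/

lemma zSet_antitone {k k' : ℕ} (h : k ≤ k') : zSet K X k' ⊆ zSet K X k := by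
  intro f hf x y hxy hl
  exact hf x y hxy (hl.trans (tsub_le_tsub_right (by exact_mod_cast h) 1))

lemma zSet_zero_mem (k : ℕ) : (0 : IncidenceAlgebra K X) ∈ zSet K X k :=
  fun _ _ _ _ => rfl

lemma zSet_add {k : ℕ} {f g : IncidenceAlgebra K X} (hf : f ∈ zSet K X k)
    (hg : g ∈ zSet K X k) : f + g ∈ zSet K X k := by
  intro x y hxy hl
  rw [IncidenceAlgebra.add_apply, hf x y hxy hl, hg x y hxy hl, add_zero]

lemma zSet_neg {k : ℕ} {f : IncidenceAlgebra K X} (hf : f ∈ zSet K X k) :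
    -f ∈ zSet K X k := by
  intro x y hxy hl
  rw [IncidenceAlgebra.neg_apply, hf x y hxy hl, neg_zero]

lemma zSet_sub {k : ℕ} {f g : IncidenceAlgebra K X} (hf : f ∈ zSet K X k)
    (hg : g ∈ zSet K X k) : f - g ∈ zSet K X k := by
  rw [sub_eq_add_neg]; exact zSet_add hf (zSet_neg hg)

lemma zSet_mul_left {k : ℕ} {f : IncidenceAlgebra K X} (g : IncidenceAlgebra K X)
    (hf : f ∈ zSet K X k) : g * f ∈ zSet K X k := by
  intro x y hxy hl
  rw [mul_apply]
  refine Finset.sum_eq_zero fun z hz => ?_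
  rw [Finset.mem_Icc] at hz
  rw [hf z y hz.2 ((intervalLength_mono_right hz.1 hz.2).trans hl), mul_zero]

lemma zSet_mul_right {k : ℕ} {f : IncidenceAlgebra K X} (g : IncidenceAlgebra K X)
    (hf : f ∈ zSet K X k) : f * g ∈ zSet K X k := by
  intro x y hxy hl
  rw [mul_apply]
  refine Finset.sum_eq_zero fun z hz => ?_
  rw [Finset.mem_Icc] at hz
  rw [hf x z hz.1 ((intervalLength_mono_left hz.1 hz.2).trans hl), zero_mul]

lemma zSet_mul {i j : ℕ} (hi : 1 ≤ i) (hj : 1 ≤ j) {f g : IncidenceAlgebra K X}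
    (hf : f ∈ zSet K X i) (hg : g ∈ zSet K X j) : f * g ∈ zSet K X (i + j) := by
  intro x y hxy hl
  rw [mul_apply]
  refine Finset.sum_eq_zero fun z hz => ?_
  rw [Finset.mem_Icc] at hz
  by_cases hxi : intervalLength x z ≤ (i : ℕ∞) - 1
  · rw [hf x z hz.1 hxi, zero_mul]
  · have hzj : intervalLength z y ≤ (j : ℕ∞) - 1 := by
      by_contra hzj
      have key : ∀ (l c : ℕ∞), ¬ l ≤ c - 1 → c ≤ l := by
        intro l c hlc
        by_contra hcl
        push_neg at hcl
        have h1 : l + 1 ≤ c := ENat.add_one_le_iff (by exact hcl.ne_top) |>.2 hcl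
        exact hlc (ENat.le_sub_of_add_le_left (by simp) (by rwa [add_comm]))
      have hxi' : (i : ℕ∞) ≤ intervalLength x z := key _ _ hxi
      have hzj' : (j : ℕ∞) ≤ intervalLength z y := key _ _ hzj
      have : ((i + j : ℕ) : ℕ∞) ≤ intervalLength x y := by
        push_cast
        exact (add_le_add hxi' hzj').trans (intervalLength_add_le hz.1 hz.2)
      have hlt : intervalLength x y < ((i + j : ℕ) : ℕ∞) := by
        refine lt_of_le_of_lt hl ?_
        rw [← Nat.cast_one, ← ENat.coe_sub, Nat.cast_lt]
        omega
      exact absurd this (not_le.2 hlt)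
    rw [hg z y hz.2 hzj, mul_zero]


/-! ### The subgroups `1 + Z_k` -/

lemma mul_diag_apply (f g : IncidenceAlgebra K X) (x : X) : (f * g) x x = f x x * g x x := by
  rw [mul_apply, Finset.Icc_self, Finset.sum_singleton]

/-- The subgroup of units congruent to `1` modulo `Z_k`. -/
def sgp (K : Type*) [Field K] (X : Type*) [PartialOrder X] [LocallyFiniteOrder X]
    [DecidableEq X] (k : ℕ) : Subgroup (IncidenceAlgebra K X)ˣ where
  carrier := {u | ((u : IncidenceAlgebra K X) - 1) ∈ zSet K X k}
  one_mem' := by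
    simpa using zSet_zero_mem (K := K) (X := X) k
  mul_mem' := by
    intro u v hu hv
    have h : ((u * v : (IncidenceAlgebra K X)ˣ) : IncidenceAlgebra K X) - 1 =
        ((u : IncidenceAlgebra K X) - 1) * ((v : IncidenceAlgebra K X) - 1) +
          (((u : IncidenceAlgebra K X) - 1) + ((v : IncidenceAlgebra K X) - 1)) := by
      rw [Units.val_mul]; noncomm_ring
    show _ ∈ zSet K X k
    rw [h]
    exact zSet_add (zSet_mul_left _ hv) (zSet_add hu hv)
  inv_mem' := by
    intro u hu
    show _ ∈ zSet K X k
    have hinv : ((u⁻¹ : (IncidenceAlgebra K X)ˣ) : IncidenceAlgebra K X) *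
        (u : IncidenceAlgebra K X) = 1 := by
      rw [← Units.val_mul, inv_mul_cancel, Units.val_one]
    have h : ((u⁻¹ : (IncidenceAlgebra K X)ˣ) : IncidenceAlgebra K X) - 1 =
        -(((u⁻¹ : (IncidenceAlgebra K X)ˣ) : IncidenceAlgebra K X) *
          ((u : IncidenceAlgebra K X) - 1)) := by
      rw [mul_sub, hinv, mul_one, neg_sub]
    rw [h]
    exact zSet_neg (zSet_mul_left _ hu)

lemma mem_sgp {k : ℕ} {u : (IncidenceAlgebra K X)ˣ} :
    u ∈ sgp K X k ↔ ((u : IncidenceAlgebra K X) - 1) ∈ zSet K X k := Iff.rfl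

lemma sgp_antitone {k k' : ℕ} (h : k ≤ k') : sgp K X k' ≤ sgp K X k :=
  fun _ hu => zSet_antitone h hu

lemma unit_diag (u : (IncidenceAlgebra K X)ˣ) (x : X) :
    (u : IncidenceAlgebra K X) x x * ((u⁻¹ : (IncidenceAlgebra K X)ˣ) : IncidenceAlgebra K X) x x
      = 1 := by
  have h : ((u : IncidenceAlgebra K X) *
      ((u⁻¹ : (IncidenceAlgebra K X)ˣ) : IncidenceAlgebra K X)) x x = (1 : IncidenceAlgebra K X) x x := by
    rw [← Units.val_mul, mul_inv_cancel, Units.val_one]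
  rwa [mul_diag_apply, one_apply, if_pos rfl] at h

lemma commutator_mem_sgp_one (u v : (IncidenceAlgebra K X)ˣ) : ⁅u, v⁆ ∈ sgp K X 1 := by
  rw [mem_sgp]
  intro x y hxy hl
  have hxy' : x = y := eq_of_intervalLength_le_zero hxy (by simpa using hl)
  subst hxy'
  rw [IncidenceAlgebra.sub_apply, one_apply, if_pos rfl]
  have hc : ((⁅u, v⁆ : (IncidenceAlgebra K X)ˣ) : IncidenceAlgebra K X) x x = 1 := by
    rw [commutatorElement_def, Units.val_mul, Units.val_mul, Units.val_mul,
      mul_diag_apply, mul_diag_apply, mul_diag_apply]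
    calc (u : IncidenceAlgebra K X) x x * (v : IncidenceAlgebra K X) x x *
          ((u⁻¹ : (IncidenceAlgebra K X)ˣ) : IncidenceAlgebra K X) x x *
          ((v⁻¹ : (IncidenceAlgebra K X)ˣ) : IncidenceAlgebra K X) x x
        = ((u : IncidenceAlgebra K X) x x *
            ((u⁻¹ : (IncidenceAlgebra K X)ˣ) : IncidenceAlgebra K X) x x) *
          ((v : IncidenceAlgebra K X) x x *
            ((v⁻¹ : (IncidenceAlgebra K X)ˣ) : IncidenceAlgebra K X) x x) := by ring
      _ = 1 := by rw [unit_diag, unit_diag, one_mul]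
  rw [hc, sub_self]

lemma commutator_val_sub_one (u v : (IncidenceAlgebra K X)ˣ) :
    ((⁅u, v⁆ : (IncidenceAlgebra K X)ˣ) : IncidenceAlgebra K X) - 1 =
      ((u : IncidenceAlgebra K X) * (v : IncidenceAlgebra K X) -
        (v : IncidenceAlgebra K X) * (u : IncidenceAlgebra K X)) *
      (((v * u)⁻¹ : (IncidenceAlgebra K X)ˣ) : IncidenceAlgebra K X) := by
  have h : ((v * u : (IncidenceAlgebra K X)ˣ) : IncidenceAlgebra K X) *
      (((v * u)⁻¹ : (IncidenceAlgebra K X)ˣ) : IncidenceAlgebra K X) = 1 := by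
    rw [← Units.val_mul, mul_inv_cancel, Units.val_one]
  rw [commutatorElement_def, sub_mul,
    show ((v : IncidenceAlgebra K X) * (u : IncidenceAlgebra K X)) =
      ((v * u : (IncidenceAlgebra K X)ˣ) : IncidenceAlgebra K X) from (Units.val_mul v u).symm,
    h]
  simp [Units.val_mul, mul_inv_rev, mul_assoc]

lemma commutator_mem_sgp_add {i j : ℕ} (hi : 1 ≤ i) (hj : 1 ≤ j)
    {u v : (IncidenceAlgebra K X)ˣ} (hu : u ∈ sgp K X i) (hv : v ∈ sgp K X j) :
    ⁅u, v⁆ ∈ sgp K X (i + j) := by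
  rw [mem_sgp, commutator_val_sub_one]
  apply zSet_mul_right
  have h : (u : IncidenceAlgebra K X) * (v : IncidenceAlgebra K X) -
      (v : IncidenceAlgebra K X) * (u : IncidenceAlgebra K X) =
      ((u : IncidenceAlgebra K X) - 1) * ((v : IncidenceAlgebra K X) - 1) -
        ((v : IncidenceAlgebra K X) - 1) * ((u : IncidenceAlgebra K X) - 1) := by noncomm_ring
  rw [h]
  have h2 := zSet_mul hj hi hv hu
  rw [Nat.add_comm j i] at h2
  exact zSet_sub (zSet_mul hi hj hu hv) h2

lemma derivedSeries_le_sgp :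
    ∀ m : ℕ, derivedSeries (IncidenceAlgebra K X)ˣ (m + 1) ≤ sgp K X (2 ^ m) := by
  intro m
  induction m with
  | zero =>
    rw [pow_zero]
    rw [derivedSeries_succ, derivedSeries_zero]
    exact Subgroup.commutator_le.2 fun g₁ _ g₂ _ => commutator_mem_sgp_one g₁ g₂
  | succ m ih =>
    rw [derivedSeries_succ]
    calc ⁅derivedSeries (IncidenceAlgebra K X)ˣ (m + 1),
          derivedSeries (IncidenceAlgebra K X)ˣ (m + 1)⁆
        ≤ ⁅sgp K X (2 ^ m), sgp K X (2 ^ m)⁆ := Subgroup.commutator_mono ih ih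
      _ ≤ sgp K X (2 ^ m + 2 ^ m) := Subgroup.commutator_le.2 fun g₁ h₁ g₂ h₂ =>
          commutator_mem_sgp_add Nat.one_le_two_pow Nat.one_le_two_pow h₁ h₂
      _ = sgp K X (2 ^ (m + 1)) := by
          have h2 : 2 ^ m + 2 ^ m = 2 ^ (m + 1) := by rw [pow_succ]; omega
          rw [h2]

lemma isSolvable_of_bounded (h : (Set.univ : Set X).chainHeight (· < ·) ≠ ⊤) :
    IsSolvable (IncidenceAlgebra K X)ˣ := by
  obtain ⟨n, hn⟩ := WithTop.ne_top_iff_exists.1 h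
  have hz : ∀ f ∈ zSet K X (n + 1), f = 0 := by
    intro f hf
    ext x y hxy
    rw [IncidenceAlgebra.zero_apply]
    refine hf x y hxy ?_
    have h1 : (Set.Icc x y).chainHeight (· < ·) ≤ (n : ℕ∞) := by
      have h2 : (Set.Icc x y).chainHeight (· < ·) ≤ (Set.univ : Set X).chainHeight (· < ·) :=
        Set.chainHeight_mono _ _ _ (Set.subset_univ _)
      rwa [← hn] at h2
    calc intervalLength x y ≤ (n : ℕ∞) - 1 := tsub_le_tsub_right h1 1
      _ ≤ ((n + 1 : ℕ) : ℕ∞) - 1 := by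
          refine tsub_le_tsub_right ?_ 1
          exact_mod_cast Nat.le_succ n
  have hsgp : sgp K X (n + 1) = ⊥ := by
    rw [eq_bot_iff]
    intro u hu
    rw [mem_sgp] at hu
    have := hz _ hu
    have hu1 : (u : IncidenceAlgebra K X) = 1 := by
      have := sub_eq_zero.1 this
      exact this
    simp only [Subgroup.mem_bot]
    exact Units.ext hu1
  refine (isSolvable_def _).2 ?_
  refine ⟨n + 2, ?_⟩
  rw [eq_bot_iff, ← hsgp]
  calc derivedSeries (IncidenceAlgebra K X)ˣ (n + 2) ≤ sgp K X (2 ^ (n + 1)) :=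
        derivedSeries_le_sgp (n + 1)
    _ ≤ sgp K X (n + 1) := sgp_antitone (Nat.lt_two_pow_self (n := n + 1)).le


/-! ### Elementary units along a chain -/

/-- The element of the incidence algebra with a single entry `1` at `(x, y)`. -/
def esingle (x y : X) (hxy : x ≤ y) : IncidenceAlgebra K X :=
  ⟨fun a b => if a = x ∧ b = y then 1 else 0, fun a b hab => by
    rw [if_neg]
    rintro ⟨rfl, rfl⟩
    exact hab hxy⟩

lemma esingle_apply (x y a b : X) (hxy : x ≤ y) :
    esingle (K := K) x y hxy a b = if a = x ∧ b = y then 1 else 0 := rfl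

lemma esingle_mul_self {x y : X} (h : x < y) :
    esingle (K := K) x y h.le * esingle x y h.le = 0 := by
  ext a b hab
  rw [mul_apply, IncidenceAlgebra.zero_apply]
  refine Finset.sum_eq_zero fun c hc => ?_
  rw [esingle_apply, esingle_apply]
  by_cases h1 : a = x ∧ c = y
  · obtain ⟨rfl, rfl⟩ := h1
    simp [h.ne']
  · rw [if_neg h1, zero_mul]

lemma esingle_mul_rev {x y z : X} (hxy : x < y) (hyz : y < z) :
    esingle (K := K) y z hyz.le * esingle x y hxy.le = 0 := by
  ext a b hab
  rw [mul_apply, IncidenceAlgebra.zero_apply]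
  refine Finset.sum_eq_zero fun c hc => ?_
  rw [esingle_apply, esingle_apply]
  by_cases h1 : a = y ∧ c = z
  · obtain ⟨rfl, rfl⟩ := h1
    simp [(hxy.trans hyz).ne']
  · rw [if_neg h1, zero_mul]

lemma esingle_mul {x y z : X} (hxy : x ≤ y) (hyz : y ≤ z) :
    esingle (K := K) x y hxy * esingle y z hyz = esingle x z (hxy.trans hyz) := by
  ext a b hab
  rw [mul_apply, esingle_apply]
  by_cases h1 : a = x ∧ b = z
  · obtain ⟨rfl, rfl⟩ := h1
    rw [if_pos ⟨rfl, rfl⟩]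
    rw [Finset.sum_eq_single y ?_ ?_]
    · rw [esingle_apply, esingle_apply, if_pos ⟨rfl, rfl⟩, if_pos ⟨rfl, rfl⟩, mul_one]
    · intro c _ hcy
      rw [esingle_apply, if_neg fun hh => hcy hh.2, zero_mul]
    · intro hy
      exact absurd (Finset.mem_Icc.2 ⟨hxy, hyz⟩) hy
  · rw [if_neg h1]
    refine Finset.sum_eq_zero fun c hc => ?_
    rw [esingle_apply, esingle_apply]
    by_cases h2 : a = x ∧ c = y
    · rw [if_neg (show ¬(c = y ∧ b = z) from fun h3 => h1 ⟨h2.1, h3.2⟩), mul_zero]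
    · rw [if_neg h2, zero_mul]

lemma one_add_mul_one_sub {R : Type*} [Ring R] {a : R} (ha : a * a = 0) :
    (1 + a) * (1 - a) = 1 := by
  have h : (1 + a) * (1 - a) = 1 - a * a := by noncomm_ring
  rw [h, ha, sub_zero]

lemma one_sub_mul_one_add {R : Type*} [Ring R] {a : R} (ha : a * a = 0) :
    (1 - a) * (1 + a) = 1 := by
  have h : (1 - a) * (1 + a) = 1 - a * a := by noncomm_ring
  rw [h, ha, sub_zero]

lemma comm_expand {R : Type*} [Ring R] {a b : R} (ha : a * a = 0) (hb : b * b = 0)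
    (hba : b * a = 0) : (1 + a) * (1 + b) * (1 - a) * (1 - b) = 1 + a * b := by
  have ha' : ∀ x : R, a * (a * x) = 0 := fun x => by rw [← mul_assoc, ha, zero_mul]
  have hb' : ∀ x : R, b * (b * x) = 0 := fun x => by rw [← mul_assoc, hb, zero_mul]
  have hba' : ∀ x : R, b * (a * x) = 0 := fun x => by rw [← mul_assoc, hba, zero_mul]
  simp only [mul_add, add_mul, mul_sub, sub_mul, mul_one, one_mul, mul_assoc, ha, hb, hba,
    ha', hb', hba', mul_zero, zero_mul, add_zero, zero_add, sub_zero, zero_sub]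
  abel

/-- The elementary unit `1 + E_{x,y}`. -/
def eunit {x y : X} (h : x < y) : (IncidenceAlgebra K X)ˣ where
  val := 1 + esingle x y h.le
  inv := 1 - esingle x y h.le
  val_inv := one_add_mul_one_sub (esingle_mul_self h)
  inv_val := one_sub_mul_one_add (esingle_mul_self h)

lemma eunit_ne_one {x y : X} (h : x < y) : eunit (K := K) h ≠ 1 := by
  intro hc
  have h2 := congrArg (fun u : (IncidenceAlgebra K X)ˣ => (u : IncidenceAlgebra K X) x y) hc
  simp only [Units.val_one] at h2
  rw [show ((eunit (K := K) h : (IncidenceAlgebra K X)ˣ) : IncidenceAlgebra K X)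
      = 1 + esingle x y h.le from rfl] at h2
  rw [IncidenceAlgebra.add_apply, one_apply, if_neg h.ne, esingle_apply, if_pos ⟨rfl, rfl⟩, zero_add] at h2
  exact one_ne_zero h2

lemma eunit_commutator {x y z : X} (hxy : x < y) (hyz : y < z) :
    ⁅eunit (K := K) hxy, eunit (K := K) hyz⁆ = eunit (K := K) (hxy.trans hyz) := by
  apply Units.ext
  rw [commutatorElement_def, Units.val_mul, Units.val_mul, Units.val_mul]
  show (1 + esingle x y hxy.le) * (1 + esingle y z hyz.le) * (1 - esingle x y hxy.le) *
      (1 - esingle y z hyz.le) = 1 + esingle x z (hxy.trans hyz).le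
  rw [comm_expand (esingle_mul_self hxy) (esingle_mul_self hyz) (esingle_mul_rev hxy hyz),
    esingle_mul hxy.le hyz.le]

lemma eunit_mem_derivedSeries :
    ∀ (m : ℕ) (c : ℕ → X) (a : ℕ),
      (∀ i j, a ≤ i → i < j → j ≤ a + 2 ^ m → c i < c j) →
      ∀ h : c a < c (a + 2 ^ m),
        eunit (K := K) h ∈ derivedSeries (IncidenceAlgebra K X)ˣ m := by
  intro m
  induction m with
  | zero =>
    intro c a hc h
    rw [derivedSeries_zero]
    exact Subgroup.mem_top _
  | succ m ih =>
    intro c a hc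
    have hp : 2 ^ (m + 1) = 2 ^ m + 2 ^ m := by rw [pow_succ]; omega
    have h2p : 0 < 2 ^ m := pow_pos (by norm_num) m
    rw [show a + 2 ^ (m + 1) = (a + 2 ^ m) + 2 ^ m by omega]
    intro h
    have hc₁ : ∀ i j, a ≤ i → i < j → j ≤ a + 2 ^ m → c i < c j := fun i j hi hij hj =>
      hc i j hi hij (by omega)
    have hc₂ : ∀ i j, a + 2 ^ m ≤ i → i < j → j ≤ (a + 2 ^ m) + 2 ^ m → c i < c j :=
      fun i j hi hij hj => hc i j (by omega) hij (by omega)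
    have h1 : c a < c (a + 2 ^ m) := hc a _ le_rfl (by omega) (by omega)
    have h2 : c (a + 2 ^ m) < c ((a + 2 ^ m) + 2 ^ m) := hc _ _ (by omega) (by omega) (by omega)
    have hu1 := ih c a hc₁ h1
    have hu2 := ih c (a + 2 ^ m) hc₂ h2
    rw [derivedSeries_succ]
    have hmem := Subgroup.commutator_mem_commutator hu1 hu2
    rw [eunit_commutator h1 h2] at hmem
    exact hmem

lemma not_isSolvable_of_unbounded (h : (Set.univ : Set X).chainHeight (· < ·) = ⊤) :
    ¬ IsSolvable (IncidenceAlgebra K X)ˣ := by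
  intro hs
  obtain ⟨n, hn⟩ := (isSolvable_def _).1 hs
  have hle : ((2 ^ n + 1 : ℕ) : ℕ∞) ≤ (Set.univ : Set X).chainHeight (· < ·) := h ▸ le_top
  obtain ⟨t, -, hlen, hch⟩ := Set.exists_isChain_of_le_chainHeight _ hle
  letI : Fintype t := (Set.finite_of_encard_eq_coe hlen).fintype
  letI : LinearOrder t :=
    @IsChain.linearOrder X _ (Classical.decRel _) t (hch.mono_rel fun _ _ h => h.le)
  have hcard : Fintype.card t = 2 ^ n + 1 := by
    have : ((Fintype.card t : ℕ) : ℕ∞) = ((2 ^ n + 1 : ℕ) : ℕ∞) := by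
      rw [← ENat.card_eq_coe_fintype_card, ENat.card_coe_set_eq, hlen]
    exact_mod_cast this
  set e := Fintype.orderIsoFinOfCardEq t hcard
  set c : ℕ → X := fun i => (e ⟨min i (2 ^ n), by omega⟩ : X) with hcdef
  have hc : ∀ i j, 0 ≤ i → i < j → j ≤ 0 + 2 ^ n → c i < c j := by
    intro i j _ hij hj
    exact e.strictMono (show (⟨min i (2 ^ n), by omega⟩ : Fin (2 ^ n + 1)) < ⟨min j (2 ^ n), by omega⟩ by
      rw [Fin.mk_lt_mk]
      omega)
  have h0 : c 0 < c (0 + 2 ^ n) :=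
    hc 0 _ le_rfl (by positivity) le_rfl
  have hmem := eunit_mem_derivedSeries (K := K) n c 0 hc h0
  rw [hn] at hmem
  exact eunit_ne_one h0 (Subgroup.mem_bot.1 hmem)

/-- the group of units of `I(X,K)` is solvable iff `X` is bounded. -/
theorem units_isSolvable_iff_bounded :
    IsSolvable (IncidenceAlgebra K X)ˣ ↔ (Set.univ : Set X).chainHeight (· < ·) ≠ ⊤ := by
  constructor
  · intro hs
    intro htop
    exact not_isSolvable_of_unbounded htop hs
  · exact isSolvable_of_bounded
end

section
/- The derived length of the group UT(n, F_2) of all n×n upper unitriangular matrices over the field with two elements equals ⌈log_2 n⌉. -/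
open Matrix

/-- Diagonal entries of a product of two upper triangular matrices multiply. -/
private lemma mul_diag {n : ℕ} {A B : Matrix (Fin n) (Fin n) (ZMod 2)}
    (hA : ∀ i j : Fin n, j < i → A i j = 0) (hB : ∀ i j : Fin n, j < i → B i j = 0) (i : Fin n) :
    (A * B) i i = A i i * B i i := by
  rw [Matrix.mul_apply]
  refine Finset.sum_eq_single i (fun k _ hk => ?_) (by simp)
  rcases lt_or_gt_of_ne hk with h | h
  · rw [hA i k h, zero_mul]
  · rw [hB k i h, mul_zero]

/-- The group `UT(n, F₂)` of upper unitriangular `n × n` matrices over the field with two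
elements, as a subgroup of the units of the matrix ring. -/
def unitriangularGroup (n : ℕ) : Subgroup (Matrix (Fin n) (Fin n) (ZMod 2))ˣ where
  carrier := {g | (∀ i, (g : Matrix (Fin n) (Fin n) (ZMod 2)) i i = 1) ∧
    ∀ i j : Fin n, j < i → (g : Matrix (Fin n) (Fin n) (ZMod 2)) i j = 0}
  one_mem' := ⟨fun i => by simp [Matrix.one_apply], fun i j h => by
    simp [Matrix.one_apply_ne (ne_of_gt h)]⟩
  mul_mem' := @fun A B hA hB => by
    obtain ⟨hAd, hAl⟩ := hA
    obtain ⟨hBd, hBl⟩ := hB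
    refine ⟨fun i => ?_, fun i j hj => ?_⟩
    · rw [Units.val_mul, mul_diag hAl hBl, hAd i, hBd i, one_mul]
    · rw [Units.val_mul, Matrix.mul_apply]
      refine Finset.sum_eq_zero fun k _ => ?_
      rcases lt_or_ge k i with h | h
      · rw [hAl i k h, zero_mul]
      · rw [hBl k j (lt_of_lt_of_le hj h), mul_zero]
  inv_mem' := @fun g hg => by
    obtain ⟨hd, hl⟩ := hg
    have : Invertible (g : Matrix (Fin n) (Fin n) (ZMod 2)) := g.invertible
    have htri : BlockTriangular ((g : Matrix (Fin n) (Fin n) (ZMod 2)))⁻¹ id :=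
      blockTriangular_inv_of_blockTriangular fun i j h => hl i j h
    have hcoe : ((g⁻¹ : (Matrix (Fin n) (Fin n) (ZMod 2))ˣ) : Matrix (Fin n) (Fin n) (ZMod 2)) =
        ((g : Matrix (Fin n) (Fin n) (ZMod 2)))⁻¹ := Matrix.coe_units_inv g
    have hl' : ∀ i j : Fin n, j < i →
        ((g⁻¹ : (Matrix (Fin n) (Fin n) (ZMod 2))ˣ) : Matrix (Fin n) (Fin n) (ZMod 2)) i j = 0 :=
      fun i j h => by rw [hcoe]; exact htri h
    refine ⟨fun i => ?_, hl'⟩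
    have h1 : ((g⁻¹ * g : (Matrix (Fin n) (Fin n) (ZMod 2))ˣ) :
        Matrix (Fin n) (Fin n) (ZMod 2)) i i = 1 := by
      rw [inv_mul_cancel]; simp [Matrix.one_apply]
    rwa [Units.val_mul, mul_diag hl' hl, hd i, mul_one] at h1

section Aux

open Matrix
open scoped commutatorElement

variable {n : ℕ}

abbrev MatN (n : ℕ) := Matrix (Fin n) (Fin n) (ZMod 2)

/-- A matrix is `m`-strict if it vanishes below the `m`-th superdiagonal. -/
def MStrict (m : ℕ) (M : MatN n) : Prop := ∀ i j : Fin n, (j : ℕ) < (i : ℕ) + m → M i j = 0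

lemma MStrict.anti {k l : ℕ} (h : k ≤ l) {M : MatN n} (hM : MStrict l M) : MStrict k M :=
  fun i j hj => hM i j (by omega)

lemma MStrict.add {m : ℕ} {A B : MatN n} (hA : MStrict m A) (hB : MStrict m B) :
    MStrict m (A + B) := fun i j hj => by
  simp [Matrix.add_apply, hA i j hj, hB i j hj]

lemma MStrict.neg {m : ℕ} {A : MatN n} (hA : MStrict m A) : MStrict m (-A) :=
  fun i j hj => by simp [Matrix.neg_apply, hA i j hj]

lemma MStrict.sub {m : ℕ} {A B : MatN n} (hA : MStrict m A) (hB : MStrict m B) :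
    MStrict m (A - B) := by
  rw [sub_eq_add_neg]; exact hA.add hB.neg

lemma MStrict.mul {k l : ℕ} {A B : MatN n} (hA : MStrict k A) (hB : MStrict l B) :
    MStrict (k + l) (A * B) := by
  intro i j hj
  rw [Matrix.mul_apply]
  refine Finset.sum_eq_zero fun p _ => ?_
  rcases lt_or_ge (p : ℕ) ((i : ℕ) + k) with h | h
  · rw [hA i p h, zero_mul]
  · rw [hB p j (by omega), mul_zero]

lemma mem_iff_mstrict {g : (MatN n)ˣ} :
    g ∈ unitriangularGroup n ↔ MStrict 1 ((g : MatN n) - 1) := by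
  constructor
  · rintro ⟨hd, hl⟩ i j hj
    rcases eq_or_lt_of_le (Nat.lt_succ_iff.mp hj) with h | h
    · have : j = i := Fin.ext h
      subst this
      simp [Matrix.sub_apply, hd j, Matrix.one_apply]
    · have hne : i ≠ j := (Fin.lt_iff_val_lt_val.mpr h).ne'
      simp [Matrix.sub_apply, hl i j (Fin.lt_iff_val_lt_val.mpr h), Matrix.one_apply_ne hne]
  · intro hs
    constructor
    · intro i
      have := hs i i (by omega)
      simpa [Matrix.sub_apply, Matrix.one_apply, sub_eq_zero] using this
    · intro i j hij
      have := hs i j (by have := Fin.lt_iff_val_lt_val.mp hij; omega)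
      have hne : i ≠ j := hij.ne'
      simpa [Matrix.sub_apply, Matrix.one_apply_ne hne, sub_eq_zero] using this

/-- The congruence subgroups of the unitriangular group. -/
def levelGroup (n m : ℕ) : Subgroup (MatN n)ˣ where
  carrier := {g | g ∈ unitriangularGroup n ∧ MStrict m ((g : MatN n) - 1)}
  one_mem' := ⟨one_mem _, fun i j _ => by simp⟩
  mul_mem' := by
    rintro a b ⟨hau, has⟩ ⟨hbu, hbs⟩
    refine ⟨mul_mem hau hbu, ?_⟩
    have key : ((a * b : (MatN n)ˣ) : MatN n) - 1
        = ((a : MatN n) - 1) * ((b : MatN n) - 1) + (((a : MatN n) - 1) + ((b : MatN n) - 1)) := by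
      rw [Units.val_mul]; noncomm_ring
    rw [key]
    exact ((has.mul hbs).anti (Nat.le_add_left m m)).add (has.add hbs)
  inv_mem' := by
    rintro g ⟨hu, hs⟩
    refine ⟨inv_mem hu, ?_⟩
    have h1 : ((g⁻¹ : (MatN n)ˣ) : MatN n) * (g : MatN n) = 1 := by
      rw [← Units.val_mul, inv_mul_cancel]; rfl
    have key : ((g⁻¹ : (MatN n)ˣ) : MatN n) - 1
        = -((((g⁻¹ : (MatN n)ˣ) : MatN n) - 1) * ((g : MatN n) - 1) + ((g : MatN n) - 1)) := by
      have e1 : (((g⁻¹ : (MatN n)ˣ) : MatN n) - 1) * ((g : MatN n) - 1)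
          = ((g⁻¹ : (MatN n)ˣ) : MatN n) * (g : MatN n) - ((g⁻¹ : (MatN n)ˣ) : MatN n)
            - (g : MatN n) + 1 := by noncomm_ring
      rw [e1, h1]; abel
    rw [key]
    have hs1 : MStrict 1 (((g⁻¹ : (MatN n)ˣ) : MatN n) - 1) := mem_iff_mstrict.mp (inv_mem hu)
    exact (((hs1.mul hs).anti (Nat.le_add_left m 1)).add hs).neg

lemma mstrict_commutator {k l : ℕ} {g h : (MatN n)ˣ} (hg : g ∈ unitriangularGroup n)
    (hh : h ∈ unitriangularGroup n) (hgs : MStrict k ((g : MatN n) - 1))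
    (hhs : MStrict l ((h : MatN n) - 1)) :
    MStrict (k + l) (((⁅g, h⁆ : (MatN n)ˣ) : MatN n) - 1) := by
  have hGGi : (g : MatN n) * ((g⁻¹ : (MatN n)ˣ) : MatN n) = 1 := by
    rw [← Units.val_mul, mul_inv_cancel]; rfl
  have hHHi : (h : MatN n) * ((h⁻¹ : (MatN n)ˣ) : MatN n) = 1 := by
    rw [← Units.val_mul, mul_inv_cancel]; rfl
  have hval : ((⁅g, h⁆ : (MatN n)ˣ) : MatN n)
      = (g : MatN n) * (h : MatN n) * ((g⁻¹ : (MatN n)ˣ) : MatN n)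
        * ((h⁻¹ : (MatN n)ˣ) : MatN n) := by
    rw [commutatorElement_def, Units.val_mul, Units.val_mul, Units.val_mul]
  have key : ((⁅g, h⁆ : (MatN n)ˣ) : MatN n) - 1
      = (((g : MatN n) - 1) * ((h : MatN n) - 1) - ((h : MatN n) - 1) * ((g : MatN n) - 1))
        * (((g⁻¹ : (MatN n)ˣ) : MatN n) * ((h⁻¹ : (MatN n)ˣ) : MatN n)) := by
    have e1 : (((g : MatN n) - 1) * ((h : MatN n) - 1) - ((h : MatN n) - 1) * ((g : MatN n) - 1))
        = (g : MatN n) * (h : MatN n) - (h : MatN n) * (g : MatN n) := by noncomm_ring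
    rw [e1, sub_mul, hval]
    have e2 : (h : MatN n) * (g : MatN n)
        * (((g⁻¹ : (MatN n)ˣ) : MatN n) * ((h⁻¹ : (MatN n)ˣ) : MatN n)) = 1 := by
      rw [mul_assoc, ← mul_assoc (g : MatN n), hGGi, one_mul, hHHi]
    rw [e2, ← mul_assoc]
  rw [key]
  have hD : MStrict (k + l)
      (((g : MatN n) - 1) * ((h : MatN n) - 1) - ((h : MatN n) - 1) * ((g : MatN n) - 1)) :=
    (hgs.mul hhs).sub ((hhs.mul hgs).anti (by omega))
  have hE : MStrict 1 (((g⁻¹ : (MatN n)ˣ) : MatN n) * ((h⁻¹ : (MatN n)ˣ) : MatN n) - 1) := by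
    have := mem_iff_mstrict.mp (mul_mem (inv_mem hg) (inv_mem hh))
    rwa [Units.val_mul] at this
  have e3 : (((g : MatN n) - 1) * ((h : MatN n) - 1) - ((h : MatN n) - 1) * ((g : MatN n) - 1))
      * (((g⁻¹ : (MatN n)ˣ) : MatN n) * ((h⁻¹ : (MatN n)ˣ) : MatN n))
      = (((g : MatN n) - 1) * ((h : MatN n) - 1) - ((h : MatN n) - 1) * ((g : MatN n) - 1))
        * ((((g⁻¹ : (MatN n)ˣ) : MatN n) * ((h⁻¹ : (MatN n)ˣ) : MatN n)) - 1)
        + (((g : MatN n) - 1) * ((h : MatN n) - 1) - ((h : MatN n) - 1) * ((g : MatN n) - 1)) := by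
    noncomm_ring
  rw [e3]
  exact ((hD.mul hE).anti (by omega)).add hD

lemma derived_map_le (n d : ℕ) :
    Subgroup.map (unitriangularGroup n).subtype
      (derivedSeries ↥(unitriangularGroup n) d) ≤ levelGroup n (2 ^ d) := by
  induction d with
  | zero =>
    rintro g ⟨⟨x, hx⟩, -, rfl⟩
    exact ⟨hx, by simpa using mem_iff_mstrict.mp hx⟩
  | succ d ih =>
    rw [derivedSeries_succ, Subgroup.map_commutator]
    refine Subgroup.commutator_le.mpr fun a ha b hb => ?_
    obtain ⟨hau, has⟩ := ih ha
    obtain ⟨hbu, hbs⟩ := ih hb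
    refine ⟨?_, ?_⟩
    · rw [commutatorElement_def]
      exact mul_mem (mul_mem (mul_mem hau hbu) (inv_mem hau)) (inv_mem hbu)
    · have := mstrict_commutator hau hbu has hbs
      rwa [show 2 ^ d + 2 ^ d = 2 ^ (d + 1) by ring] at this

/-- The elementary unitriangular unit `1 + E_{a b}`. -/
def elu (n : ℕ) (a b : Fin n) (hab : a ≠ b) : (MatN n)ˣ where
  val := 1 + single a b 1
  inv := 1 + single a b 1
  val_inv := by
    have h0 : single a b (1 : ZMod 2) * single a b 1 = 0 :=
      Matrix.single_mul_single_of_ne 1 a b a hab.symm 1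
    have h2 : single a b (1 : ZMod 2) + single a b 1 = 0 := by
      ext i j
      have : ∀ x : ZMod 2, x + x = 0 := by decide
      simp [Matrix.add_apply, this]
    have e : (1 + single a b (1 : ZMod 2)) * (1 + single a b 1)
        = 1 + (single a b 1 + single a b 1)
          + single a b 1 * single a b 1 := by noncomm_ring
    rw [e, h0, h2, add_zero, add_zero]
  inv_val := by
    have h0 : single a b (1 : ZMod 2) * single a b 1 = 0 :=
      Matrix.single_mul_single_of_ne 1 a b a hab.symm 1
    have h2 : single a b (1 : ZMod 2) + single a b 1 = 0 := by
      ext i j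
      have : ∀ x : ZMod 2, x + x = 0 := by decide
      simp [Matrix.add_apply, this]
    have e : (1 + single a b (1 : ZMod 2)) * (1 + single a b 1)
        = 1 + (single a b 1 + single a b 1)
          + single a b 1 * single a b 1 := by noncomm_ring
    rw [e, h0, h2, add_zero, add_zero]

lemma elu_inv {a b : Fin n} (hab : a ≠ b) : (elu n a b hab)⁻¹ = elu n a b hab :=
  Units.ext rfl

lemma elu_comm {a b c : Fin n} (hab : a < b) (hbc : b < c) (h1 : a ≠ b) (h2 : b ≠ c)
    (h3 : a ≠ c) : ⁅elu n a b h1, elu n b c h2⁆ = elu n a c h3 := by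
  apply Units.ext
  rw [commutatorElement_def, elu_inv, elu_inv]
  show ((1 + single a b 1) * (1 + single b c 1) * (1 + single a b 1)
      * (1 + single b c 1) : MatN n) = 1 + single a c 1
  set X : MatN n := single a b 1
  set Y : MatN n := single b c 1
  have hXX : X * X = 0 := Matrix.single_mul_single_of_ne 1 a b a h1.symm 1
  have hYY : Y * Y = 0 := Matrix.single_mul_single_of_ne 1 b c b h2.symm 1
  have hYX : Y * X = 0 := Matrix.single_mul_single_of_ne 1 b c a (Ne.symm h3) 1
  have hXY : X * Y = single a c 1 := by
    rw [Matrix.single_mul_single_same, one_mul]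
  have hX2 : X + X = 0 := by
    ext i j
    have : ∀ x : ZMod 2, x + x = 0 := by decide
    simp [Matrix.add_apply, this]
  have hY2 : Y + Y = 0 := by
    ext i j
    have : ∀ x : ZMod 2, x + x = 0 := by decide
    simp [Matrix.add_apply, this]
  have e1 : (1 + X) * (1 + Y) = 1 + X + Y + X * Y := by noncomm_ring
  have e2 : (1 + X + Y + X * Y) * (1 + X)
      = 1 + (X + X) + Y + X * Y + X * X + Y * X + X * (Y * X) := by noncomm_ring
  have e3 : (1 + Y + X * Y) * (1 + Y)
      = 1 + (Y + Y) + X * Y + Y * Y + X * (Y * Y) := by noncomm_ring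
  rw [e1, e2, hX2, hXX, hYX, mul_zero, add_zero, add_zero, add_zero, add_zero]
  rw [e3, hY2, hYY, mul_zero, add_zero, add_zero, add_zero, hXY]

lemma elu_mem_ut {a c : Fin n} (h : a < c) (hne : a ≠ c) :
    elu n a c hne ∈ unitriangularGroup n := by
  constructor
  · intro i
    have : ¬(a = i ∧ c = i) := by rintro ⟨rfl, rfl⟩; exact absurd rfl hne
    show (1 + single a c 1 : MatN n) i i = 1
    rw [Matrix.add_apply, Matrix.one_apply_eq, Matrix.single_apply_of_ne a c 1 i i this, add_zero]
  · intro i j hij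
    have hlt := Fin.lt_iff_val_lt_val.mp hij
    have hac := Fin.lt_iff_val_lt_val.mp h
    have hne2 : i ≠ j := hij.ne'
    have : ¬(a = i ∧ c = j) := by rintro ⟨rfl, rfl⟩; omega
    show (1 + single a c 1 : MatN n) i j = 0
    rw [Matrix.add_apply, Matrix.one_apply_ne hne2, Matrix.single_apply_of_ne a c 1 i j this, add_zero]

lemma elu_ne_one {a c : Fin n} (hne : a ≠ c) : elu n a c hne ≠ 1 := by
  intro hcontra
  have h := congrArg (fun u : (MatN n)ˣ => (u : MatN n) a c) hcontra
  have hval : ((elu n a c hne : (MatN n)ˣ) : MatN n) a c = 1 := by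
    show (1 + single a c 1 : MatN n) a c = 1
    rw [Matrix.add_apply, Matrix.one_apply_ne hne, Matrix.single_apply_same, zero_add]
  simp only [Units.val_one] at h
  rw [hval] at h
  rw [Matrix.one_apply_ne hne] at h
  exact one_ne_zero h

lemma elu_mem_derived (n : ℕ) (d : ℕ) :
    ∀ (a c : Fin n) (hne : a ≠ c), (a : ℕ) + 2 ^ d ≤ (c : ℕ) →
      elu n a c hne ∈ Subgroup.map (unitriangularGroup n).subtype
        (derivedSeries ↥(unitriangularGroup n) d) := by
  induction d with
  | zero =>
    intro a c hne hac
    have hlt : a < c := Fin.lt_iff_val_lt_val.mpr (by omega)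
    exact ⟨⟨elu n a c hne, elu_mem_ut hlt hne⟩, trivial, rfl⟩
  | succ d ih =>
    intro a c hne hac
    have hpow : 0 < 2 ^ d := Nat.pow_pos (by norm_num)
    have hp2 : 2 ^ d + 2 ^ d = 2 ^ (d + 1) := by ring
    have hbn : (a : ℕ) + 2 ^ d < n := by have := c.isLt; omega
    set b : Fin n := ⟨(a : ℕ) + 2 ^ d, hbn⟩ with hb
    have hbv0 : (b : ℕ) = (a : ℕ) + 2 ^ d := rfl
    have hab : a < b := Fin.lt_iff_val_lt_val.mpr (by omega)
    have hbc : b < c := Fin.lt_iff_val_lt_val.mpr (by omega)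
    rw [derivedSeries_succ, Subgroup.map_commutator]
    have hbv : (b : ℕ) = (a : ℕ) + 2 ^ d := rfl
    exact elu_comm hab hbc hab.ne hbc.ne hne ▸
      Subgroup.commutator_mem_commutator
        (ih a b hab.ne (by omega))
        (ih b c hbc.ne (by omega))

end Aux

/-- the derived length of `UT(n, F₂)` equals `⌈log₂ n⌉`. -/
theorem derivedLength_unitriangularGroup (n : ℕ) :
    sInf {d | derivedSeries ↥(unitriangularGroup n) d = ⊥} = Nat.clog 2 n := by
  have hmem : derivedSeries ↥(unitriangularGroup n) (Nat.clog 2 n) = ⊥ := by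
    rw [← Subgroup.map_eq_bot_iff_of_injective _
      (Subgroup.subtype_injective (s := unitriangularGroup n))]
    refine (Subgroup.eq_bot_iff_forall _).mpr fun g hg => ?_
    obtain ⟨hu, hs⟩ := derived_map_le n (Nat.clog 2 n) hg
    have hzero : (g : MatN n) - 1 = 0 := by
      ext i j
      have hle : n ≤ 2 ^ Nat.clog 2 n := Nat.le_pow_clog one_lt_two n
      have : (j : ℕ) < (i : ℕ) + 2 ^ Nat.clog 2 n := by have := j.isLt; omega
      simpa using hs i j this
    exact Units.ext (sub_eq_zero.mp hzero)
  refine le_antisymm (Nat.sInf_le hmem) (le_csInf ⟨_, hmem⟩ fun d hd => ?_)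
  by_contra hlt
  push_neg at hlt
  have h2d : 2 ^ d < n := (Nat.lt_clog_iff_pow_lt one_lt_two).mp hlt
  have hpos : 0 < n := lt_of_le_of_lt (Nat.zero_le _) h2d
  have hp : 0 < 2 ^ d := Nat.pow_pos (by norm_num)
  set a : Fin n := ⟨0, hpos⟩
  set c : Fin n := ⟨2 ^ d, h2d⟩
  have hne : a ≠ c := Fin.ne_of_val_ne (by simp [a, c]; omega)
  have hmem2 := elu_mem_derived n d a c hne (by simp [a, c])
  rw [Set.mem_setOf_eq] at hd
  rw [hd, Subgroup.map_bot, Subgroup.mem_bot] at hmem2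
  exact elu_ne_one hne hmem2
end

section
/- If the group of units of the incidence algebra I(X, F_2) of a locally finite poset X over the field with two elements is solvable, then its derived length equals ⌈log_2(l(X)+1)⌉. -/
set_option linter.unusedSectionVars false

open Finset

open scoped commutatorElement

variable {X : Type*} [PartialOrder X] [LocallyFiniteOrder X] [DecidableEq X]

namespace IncAux

lemma add_le_union (s t : Set X) (hst : ∀ u ∈ s, ∀ v ∈ t, u < v) :
    s.chainHeight (· < ·) + t.chainHeight (· < ·) ≤ (s ∪ t).chainHeight (· < ·) := by
  rw [Set.chainHeight_eq_iSup s, Set.chainHeight_eq_iSup t]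
  haveI : ∀ w : Set X, Nonempty {c : Set X // c ⊆ w ∧ IsChain (· < ·) c} :=
    fun w => ⟨⟨∅, Set.empty_subset _, Set.pairwise_empty _⟩⟩
  refine ENat.iSup_add_iSup_le fun c d => ?_
  have hdis : Disjoint c.1 d.1 := Set.disjoint_left.mpr fun x hx hx' =>
    lt_irrefl x (hst x (c.2.1 hx) x (d.2.1 hx'))
  rw [← Set.encard_union_eq hdis]
  refine Set.encard_le_chainHeight_of_isChain _ _ (Set.union_subset_union c.2.1 d.2.1) ?_
  intro x hx y hy hxy
  rcases hx with hx | hx <;> rcases hy with hy | hy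
  · exact c.2.2 hx hy hxy
  · exact Or.inl (hst x (c.2.1 hx) y (d.2.1 hy))
  · exact Or.inr (hst y (c.2.1 hy) x (d.2.1 hx))
  · exact d.2.2 hx hy hxy

lemma exists_seq_of_chain : ∀ (k : ℕ) (t : Set X), IsChain (· < ·) t →
    t.encard = ((k + 1 : ℕ) : ℕ∞) →
    ∃ c : ℕ → X, (∀ i ≤ k, c i ∈ t) ∧ ∀ i < k, c i < c (i + 1) := by
  intro k
  induction k with
  | zero =>
    intro t _ ht
    obtain ⟨x, rfl⟩ := Set.encard_eq_one.mp (by simpa using ht)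
    exact ⟨fun _ => x, fun _ _ => rfl, fun i hi => absurd hi (Nat.not_lt_zero i)⟩
  | succ k ih =>
    intro t hc ht
    have hfin : t.Finite := Set.finite_of_encard_eq_coe ht
    have hne : t.Nonempty := Set.nonempty_of_encard_ne_zero (by rw [ht]; simp)
    obtain ⟨m, hm⟩ := hfin.exists_maximal hne
    have hlt : ∀ y ∈ t, y ≠ m → y < m := by
      intro y hy hym
      rcases hc hy hm.1 hym with h | h
      · exact h
      · exact (lt_irrefl m (lt_of_lt_of_le h (hm.2 hy h.le))).elim
    have he := Set.encard_diff_singleton_add_one hm.1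
    rw [ht, Nat.cast_add, Nat.cast_one] at he
    have he' : (t \ {m}).encard = ((k + 1 : ℕ) : ℕ∞) :=
      ENat.add_left_injective_of_ne_top ENat.one_ne_top he
    obtain ⟨c, hcm, hcl⟩ := ih (t \ {m}) (hc.mono Set.diff_subset) he'
    refine ⟨fun i => if i ≤ k then c i else m, ?_, ?_⟩
    · intro i hi
      dsimp only
      split_ifs with h
      · exact (hcm i h).1
      · exact hm.1
    · intro i hi
      dsimp only
      by_cases hik : i < k
      · rw [if_pos hik.le, if_pos (by omega)]
        exact hcl i hik
      · have hik' : i = k := by omega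
        subst hik'
        rw [if_pos le_rfl, if_neg (by omega)]
        exact hlt _ (hcm i le_rfl).1 (hcm i le_rfl).2
    
lemma exists_seq_of_le_chainHeight (n : ℕ)
    (h : ((n + 1 : ℕ) : ℕ∞) ≤ (Set.univ : Set X).chainHeight (· < ·)) :
    ∃ c : ℕ → X, ∀ k < n, c k < c (k + 1) := by
  obtain ⟨t, _, ht, hc⟩ := Set.exists_isChain_of_le_chainHeight _ h
  obtain ⟨c, _, hcl⟩ := exists_seq_of_chain n t hc ht
  exact ⟨c, hcl⟩




/-- Level sets of the incidence algebra filtration. -/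
def S (X : Type*) [PartialOrder X] [LocallyFiniteOrder X] [DecidableEq X] (m : ℕ) :
    Set (IncidenceAlgebra (ZMod 2) X) :=
  {f | ∀ a b : X, f a b ≠ 0 → (m : ℕ∞) ≤ (Set.Ico a b).chainHeight (· < ·)}

lemma zero_mem_S (m : ℕ) : (0 : IncidenceAlgebra (ZMod 2) X) ∈ S X m :=
  fun _ _ h => absurd rfl h

lemma S_mono {m k : ℕ} (hkm : k ≤ m) : S X m ⊆ S X k :=
  fun _ hf a b h => le_trans (by exact_mod_cast hkm) (hf a b h)

lemma add_mem_S {m : ℕ} {f g : IncidenceAlgebra (ZMod 2) X}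
    (hf : f ∈ S X m) (hg : g ∈ S X m) : f + g ∈ S X m := by
  intro a b h
  rw [IncidenceAlgebra.add_apply] at h
  by_cases hfa : f a b = 0
  · exact hg a b (by simpa [hfa] using h)
  · exact hf a b hfa

lemma neg_mem_S {m : ℕ} {f : IncidenceAlgebra (ZMod 2) X} (hf : f ∈ S X m) :
    -f ∈ S X m := by
  intro a b h
  rw [IncidenceAlgebra.neg_apply, neg_ne_zero] at h
  exact hf a b h

lemma mul_mem_S {p q : ℕ} {f g : IncidenceAlgebra (ZMod 2) X}
    (hf : f ∈ S X p) (hg : g ∈ S X q) : f * g ∈ S X (p + q) := by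
  intro a b h
  rw [IncidenceAlgebra.mul_apply] at h
  obtain ⟨x, hx, hfg⟩ := Finset.exists_ne_zero_of_sum_ne_zero h
  rw [Finset.mem_Icc] at hx
  have hfx : f a x ≠ 0 := fun h0 => hfg (by rw [h0, zero_mul])
  have hgx : g x b ≠ 0 := fun h0 => hfg (by rw [h0, mul_zero])
  have h1 := hf a x hfx
  have h2 := hg x b hgx
  have hu : (Set.Ico a x).chainHeight (· < ·) + (Set.Ico x b).chainHeight (· < ·)
      ≤ (Set.Ico a x ∪ Set.Ico x b).chainHeight (· < ·) :=
    add_le_union _ _ fun u hu v hv => lt_of_lt_of_le hu.2 hv.1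
  have hsub : Set.Ico a x ∪ Set.Ico x b ⊆ Set.Ico a b := by
    rintro y (hy | hy)
    · exact ⟨hy.1, lt_of_lt_of_le hy.2 hx.2⟩
    · exact ⟨le_trans hx.1 hy.1, hy.2⟩
  calc ((p + q : ℕ) : ℕ∞) = (p : ℕ∞) + q := by push_cast; rfl
    _ ≤ (Set.Ico a x).chainHeight (· < ·) + (Set.Ico x b).chainHeight (· < ·) := add_le_add h1 h2
    _ ≤ (Set.Ico a x ∪ Set.Ico x b).chainHeight (· < ·) := hu
    _ ≤ (Set.Ico a b).chainHeight (· < ·) := Set.chainHeight_mono _ _ _ hsub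

lemma mul_mem_S_left {m : ℕ} {f g : IncidenceAlgebra (ZMod 2) X} (hf : f ∈ S X m) :
    g * f ∈ S X m := by
  have hg : g ∈ S X 0 := fun a b _ => by simp
  simpa using mul_mem_S hg hf

lemma mul_mem_S_right {m : ℕ} {f g : IncidenceAlgebra (ZMod 2) X} (hf : f ∈ S X m) :
    f * g ∈ S X m := by
  have hg : g ∈ S X 0 := fun a b _ => by simp
  simpa using mul_mem_S hf hg






/-- Subgroup filtration of the unit group. -/
def G (X : Type*) [PartialOrder X] [LocallyFiniteOrder X] [DecidableEq X] (m : ℕ) :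
    Subgroup (IncidenceAlgebra (ZMod 2) X)ˣ where
  carrier := {u | ((u : IncidenceAlgebra (ZMod 2) X) - 1) ∈ S X m}
  one_mem' := by
    simpa using zero_mem_S (X := X) m
  mul_mem' := by
    intro u v hu hv
    have key : ((u * v : (IncidenceAlgebra (ZMod 2) X)ˣ) : IncidenceAlgebra (ZMod 2) X) - 1
        = ((u : IncidenceAlgebra (ZMod 2) X) - 1) * ((v : IncidenceAlgebra (ZMod 2) X) - 1)
          + (((u : IncidenceAlgebra (ZMod 2) X) - 1) + ((v : IncidenceAlgebra (ZMod 2) X) - 1)) := by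
      rw [Units.val_mul]; noncomm_ring
    show _ ∈ S X m
    rw [key]
    exact add_mem_S (S_mono (Nat.le_add_left m m) (mul_mem_S hu hv)) (add_mem_S hu hv)
  inv_mem' := by
    intro u hu
    have key : ((u⁻¹ : (IncidenceAlgebra (ZMod 2) X)ˣ) : IncidenceAlgebra (ZMod 2) X) - 1
        = -(((u⁻¹ : (IncidenceAlgebra (ZMod 2) X)ˣ) : IncidenceAlgebra (ZMod 2) X)
            * ((u : IncidenceAlgebra (ZMod 2) X) - 1)) := by
      rw [mul_sub, mul_one, Units.inv_mul, neg_sub]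
    show _ ∈ S X m
    rw [key]
    exact neg_mem_S (mul_mem_S_left hu)

lemma mem_G {m : ℕ} {u : (IncidenceAlgebra (ZMod 2) X)ˣ} :
    u ∈ G X m ↔ ((u : IncidenceAlgebra (ZMod 2) X) - 1) ∈ S X m := Iff.rfl

lemma diag_eq_one (u : (IncidenceAlgebra (ZMod 2) X)ˣ) (a : X) :
    (u : IncidenceAlgebra (ZMod 2) X) a a = 1 := by
  have h : ((u : IncidenceAlgebra (ZMod 2) X)
      * ((u⁻¹ : (IncidenceAlgebra (ZMod 2) X)ˣ) : IncidenceAlgebra (ZMod 2) X)) a a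
      = (1 : IncidenceAlgebra (ZMod 2) X) a a := by rw [Units.mul_inv]
  rw [IncidenceAlgebra.mul_apply, Finset.Icc_self, Finset.sum_singleton,
    IncidenceAlgebra.one_apply, if_pos rfl] at h
  have hz : ∀ x y : ZMod 2, x * y = 1 → x = 1 := by decide
  exact hz _ _ h

lemma mem_G_one (u : (IncidenceAlgebra (ZMod 2) X)ˣ) : u ∈ G X 1 := by
  rw [mem_G]
  intro a b h
  rw [IncidenceAlgebra.sub_apply, IncidenceAlgebra.one_apply] at h
  by_cases hab : a = b
  · subst hab; rw [diag_eq_one, if_pos rfl, sub_self] at h; exact absurd rfl h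
  · rw [if_neg hab, sub_zero] at h
    have hle : a ≤ b := IncidenceAlgebra.le_of_ne_zero h
    have : a ∈ Set.Ico a b := ⟨le_refl a, lt_of_le_of_ne hle hab⟩
    calc ((1:ℕ):ℕ∞) = 1 := Nat.cast_one
      _ ≤ _ := (Set.one_le_chainHeight_iff _ _).mpr ⟨a, this⟩

lemma commutator_mem_G {p q : ℕ} {u v : (IncidenceAlgebra (ZMod 2) X)ˣ}
    (hu : u ∈ G X p) (hv : v ∈ G X q) : ⁅u, v⁆ ∈ G X (p + q) := by
  rw [mem_G] at hu hv ⊢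
  set a := (u : IncidenceAlgebra (ZMod 2) X)
  set b := (v : IncidenceAlgebra (ZMod 2) X)
  set ai := ((u⁻¹ : (IncidenceAlgebra (ZMod 2) X)ˣ) : IncidenceAlgebra (ZMod 2) X)
  set bi := ((v⁻¹ : (IncidenceAlgebra (ZMod 2) X)ˣ) : IncidenceAlgebra (ZMod 2) X)
  have key : ((⁅u, v⁆ : (IncidenceAlgebra (ZMod 2) X)ˣ) : IncidenceAlgebra (ZMod 2) X) - 1
      = ((a - 1) * (b - 1) - (b - 1) * (a - 1)) * (ai * bi) := by
    have h1 : a * ai = 1 := Units.mul_inv u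
    have h2 : b * bi = 1 := Units.mul_inv v
    have expand : ((a - 1) * (b - 1) - (b - 1) * (a - 1)) * (ai * bi)
        = a * b * ai * bi - b * (a * ai) * bi := by noncomm_ring
    rw [commutatorElement_def, Units.val_mul, Units.val_mul, Units.val_mul, expand, h1, mul_one, h2]
  rw [key]
  have h3 : (a - 1) * (b - 1) - (b - 1) * (a - 1) ∈ S X (p + q) := by
    rw [sub_eq_add_neg]
    exact add_mem_S (mul_mem_S hu hv)
      (neg_mem_S (by rw [Nat.add_comm p q]; exact mul_mem_S hv hu))
  exact mul_mem_S_right h3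

lemma derivedSeries_le_G (n : ℕ) :
    derivedSeries (IncidenceAlgebra (ZMod 2) X)ˣ n ≤ G X (2 ^ n) := by
  induction n with
  | zero => exact fun u _ => by simpa using mem_G_one u
  | succ n ih =>
    rw [derivedSeries_succ]
    have h : (⁅derivedSeries (IncidenceAlgebra (ZMod 2) X)ˣ n,
        derivedSeries (IncidenceAlgebra (ZMod 2) X)ˣ n⁆ : Subgroup _) ≤ G X (2 ^ n + 2 ^ n) :=
      Subgroup.commutator_le.mpr fun g hg k hk => commutator_mem_G (ih hg) (ih hk)
    have e : 2 ^ (n + 1) = 2 ^ n + 2 ^ n := by ring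
    rw [e]
    exact h





open Classical in
/-- Matrix-unit-like element of the incidence algebra. -/
noncomputable def E (x y : X) : IncidenceAlgebra (ZMod 2) X :=
  ⟨fun a b => if a = x ∧ b = y ∧ x ≤ y then 1 else 0, by
    intro a b hab
    split_ifs with h
    · obtain ⟨rfl, rfl, hxy⟩ := h; exact absurd hxy hab
    · rfl⟩

open Classical in
lemma E_apply (x y a b : X) :
    E x y a b = if a = x ∧ b = y ∧ x ≤ y then 1 else 0 := rfl

lemma E_self_apply {x y : X} (h : x ≤ y) : E x y x y = 1 := by
  rw [E_apply, if_pos ⟨rfl, rfl, h⟩]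

lemma E_ne_zero {x y : X} (h : x ≤ y) : E x y ≠ 0 := by
  intro h0
  have := E_self_apply h
  rw [h0, IncidenceAlgebra.zero_apply] at this
  exact one_ne_zero this.symm

lemma add_self (f : IncidenceAlgebra (ZMod 2) X) : f + f = 0 := by
  have hz : ∀ c : ZMod 2, c + c = 0 := by decide
  ext a b _
  rw [IncidenceAlgebra.add_apply, IncidenceAlgebra.zero_apply]
  exact hz _

lemma E_mul_E_of_ne {x y z w : X} (h : y ≠ z) :
    E x y * E z w = (0 : IncidenceAlgebra (ZMod 2) X) := by
  ext a b _
  rw [IncidenceAlgebra.mul_apply, IncidenceAlgebra.zero_apply]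
  apply Finset.sum_eq_zero
  intro t _
  by_cases hty : t = y
  · rw [E_apply z w t b, if_neg (fun hc => h (hty.symm.trans hc.1)), mul_zero]
  · rw [E_apply x y a t, if_neg (fun hc => hty hc.2.1), zero_mul]

lemma E_mul_E {x y z : X} (hxy : x < y) (hyz : y < z) :
    E x y * E y z = E (X := X) x z := by
  ext a b _
  rw [IncidenceAlgebra.mul_apply]
  by_cases hax : a = x
  · by_cases hbz : b = z
    · rw [Finset.sum_eq_single y]
      · rw [E_apply x y a y, E_apply y z y b, E_apply x z a b,
          if_pos ⟨hax, rfl, hxy.le⟩, if_pos ⟨rfl, hbz, hyz.le⟩,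
          if_pos ⟨hax, hbz, (hxy.trans hyz).le⟩, one_mul]
      · intro t _ hty
        rw [E_apply x y a t, if_neg (fun hc => hty hc.2.1), zero_mul]
      · intro hy
        exact absurd (Finset.mem_Icc.mpr
          ⟨hax.le.trans hxy.le, hyz.le.trans hbz.symm.le⟩) hy
    · rw [E_apply x z a b, if_neg (fun hc => hbz hc.2.1)]
      apply Finset.sum_eq_zero
      intro t _
      rw [E_apply y z t b, if_neg (fun hc => hbz hc.2.1), mul_zero]
  · rw [E_apply x z a b, if_neg (fun hc => hax hc.1)]
    apply Finset.sum_eq_zero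
    intro t _
    rw [E_apply x y a t, if_neg (fun hc => hax hc.1), zero_mul]

/-- The involutive unit `1 + E x y`. -/
noncomputable def EU (x y : X) (h : x < y) : (IncidenceAlgebra (ZMod 2) X)ˣ where
  val := 1 + E x y
  inv := 1 + E x y
  val_inv := by
    have hEE : E x y * E x y = (0 : IncidenceAlgebra (ZMod 2) X) := E_mul_E_of_ne h.ne'
    have expand : ((1 : IncidenceAlgebra (ZMod 2) X) + E x y) * (1 + E x y)
        = 1 + ((E x y + E x y) + E x y * E x y) := by noncomm_ring
    rw [expand, add_self, hEE, add_zero, add_zero]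
  inv_val := by
    have hEE : E x y * E x y = (0 : IncidenceAlgebra (ZMod 2) X) := E_mul_E_of_ne h.ne'
    have expand : ((1 : IncidenceAlgebra (ZMod 2) X) + E x y) * (1 + E x y)
        = 1 + ((E x y + E x y) + E x y * E x y) := by noncomm_ring
    rw [expand, add_self, hEE, add_zero, add_zero]

lemma EU_val (x y : X) (h : x < y) :
    ((EU x y h : (IncidenceAlgebra (ZMod 2) X)ˣ) : IncidenceAlgebra (ZMod 2) X)
      = 1 + E x y := rfl

lemma EU_ne_one {x y : X} (h : x < y) : EU x y h ≠ 1 := by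
  intro h1
  have hval : (1 + E x y : IncidenceAlgebra (ZMod 2) X) = 1 := by
    rw [← EU_val x y h, h1, Units.val_one]
  have h2 : (1 + E x y : IncidenceAlgebra (ZMod 2) X) x y
      = (1 : IncidenceAlgebra (ZMod 2) X) x y := by rw [hval]
  rw [IncidenceAlgebra.add_apply, IncidenceAlgebra.one_apply, if_neg h.ne,
    E_self_apply h.le, zero_add] at h2
  exact one_ne_zero h2

lemma EU_commutator {x y z : X} (hxy : x < y) (hyz : y < z) :
    ⁅EU x y hxy, EU y z hyz⁆ = EU x z (hxy.trans hyz) := by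
  apply Units.ext
  have hval : ((⁅EU x y hxy, EU y z hyz⁆ : (IncidenceAlgebra (ZMod 2) X)ˣ)
      : IncidenceAlgebra (ZMod 2) X)
      = (1 + E x y) * (1 + E y z) * ((1 + E x y) * (1 + E y z)) := by
    rw [commutatorElement_def, Units.val_mul, Units.val_mul, Units.val_mul]
    rw [show ((EU x y hxy)⁻¹ : (IncidenceAlgebra (ZMod 2) X)ˣ).val = 1 + E x y from rfl,
      show ((EU y z hyz)⁻¹ : (IncidenceAlgebra (ZMod 2) X)ˣ).val = 1 + E y z from rfl,
      EU_val, EU_val, mul_assoc]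
  rw [hval, EU_val]
  set a := E (X := X) x y with ha'
  set b := E (X := X) y z with hb'
  have haa : a * a = 0 := E_mul_E_of_ne hxy.ne'
  have hbb : b * b = 0 := E_mul_E_of_ne hyz.ne'
  have hba : b * a = 0 := E_mul_E_of_ne (hxy.trans hyz).ne'
  have hab : a * b = E x z := E_mul_E hxy hyz
  have hac : a * (a * b) = 0 := by rw [← mul_assoc, haa, zero_mul]
  have hbc : b * (a * b) = 0 := by rw [← mul_assoc, hba, zero_mul]
  have hca : a * b * a = 0 := by rw [mul_assoc, hba, mul_zero]
  have hcb : a * b * b = 0 := by rw [mul_assoc, hbb, mul_zero]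
  have hcc : a * b * (a * b) = 0 := by rw [← mul_assoc, hca, zero_mul]
  have hp : ((1 : IncidenceAlgebra (ZMod 2) X) + a) * (1 + b) = 1 + (a + b + a * b) := by
    noncomm_ring
  set s := a + b + a * b with hs'
  have hsq : ((1 : IncidenceAlgebra (ZMod 2) X) + s) * (1 + s) = 1 + (s + s) + s * s := by
    noncomm_ring
  have hss : s * s = a * b := by
    rw [hs']
    simp only [add_mul, mul_add, haa, hbb, hba, hac, hbc, hca, hcb, hcc,
      zero_add, add_zero, zero_mul, mul_zero]
  rw [hp, hsq, add_self, hss, hab, add_zero]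



lemma c_strict (c : ℕ → X) {N : ℕ} (hc : ∀ k < N, c k < c (k + 1)) :
    ∀ j ≤ N, ∀ i < j, c i < c j := by
  intro j
  induction j with
  | zero => intro _ i hi; omega
  | succ j ih =>
    intro hjN i hij
    rcases Nat.lt_succ_iff_lt_or_eq.mp hij with h' | rfl
    · exact (ih (by omega) i h').trans (hc j (by omega))
    · exact hc i (by omega)

lemma chain_mem : ∀ (n : ℕ) (x y : X) (h : x < y),
    (∃ c : ℕ → X, c 0 = x ∧ c (2 ^ n) = y ∧ ∀ k < 2 ^ n, c k < c (k + 1)) →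
    EU x y h ∈ derivedSeries (IncidenceAlgebra (ZMod 2) X)ˣ n := by
  intro n
  induction n with
  | zero => intro x y h _; exact Subgroup.mem_top _
  | succ n ih =>
    rintro x y h ⟨c, hc0, hcN, hc⟩
    have hpow : (2 : ℕ) ^ (n + 1) = 2 ^ n + 2 ^ n := by ring
    have hpos : 0 < 2 ^ n := Nat.two_pow_pos n
    have h1 : x < c (2 ^ n) := by
      rw [← hc0]
      exact c_strict c hc (2 ^ n) (by omega) 0 hpos
    have h2 : c (2 ^ n) < y := by
      rw [← hcN]
      exact c_strict c hc (2 ^ (n + 1)) le_rfl (2 ^ n) (by omega)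
    have m1 : EU x (c (2 ^ n)) h1 ∈ derivedSeries (IncidenceAlgebra (ZMod 2) X)ˣ n :=
      ih x _ h1 ⟨c, hc0, rfl, fun k hk => hc k (by omega)⟩
    have m2 : EU (c (2 ^ n)) y h2 ∈ derivedSeries (IncidenceAlgebra (ZMod 2) X)ˣ n := by
      refine ih _ y h2 ⟨fun i => c (2 ^ n + i), rfl, ?_, ?_⟩
      · rw [← hcN]; exact congrArg c (by omega)
      · intro k hk
        have hlt := hc (2 ^ n + k) (by omega)
        exact lt_of_lt_of_le hlt (le_of_eq (congrArg c (by omega)))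
    rw [derivedSeries_succ]
    have hcom := Subgroup.commutator_mem_commutator m1 m2
    rw [EU_commutator h1 h2] at hcom
    exact hcom

end IncAux

/-- if the group of units of `I(X,F₂)` is solvable, then its derived length
equals `⌈log₂(l(X)+1)⌉`. -/
theorem units_derivedLength_eq_of_char_two
    (h : IsSolvable (IncidenceAlgebra (ZMod 2) X)ˣ) :
    sInf {n | derivedSeries (IncidenceAlgebra (ZMod 2) X)ˣ n = ⊥} =
      Nat.clog 2 (((Set.univ : Set X).chainHeight (· < ·) - 1).toNat + 1) := by
  classical
  obtain ⟨n0, hn0⟩ := h.solvable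
  have upper : ∀ n : ℕ, (Set.univ : Set X).chainHeight (· < ·) ≤ ((2 ^ n : ℕ) : ℕ∞) →
      derivedSeries (IncidenceAlgebra (ZMod 2) X)ˣ n = ⊥ := by
    intro n hn
    rw [eq_bot_iff]
    intro u hu
    have hu' : ((u : IncidenceAlgebra (ZMod 2) X) - 1) ∈ IncAux.S X (2 ^ n) :=
      IncAux.derivedSeries_le_G n hu
    have hsub : ((u : IncidenceAlgebra (ZMod 2) X) - 1) = 0 := by
      by_contra hne
      have hex : ∃ a b : X, ((u : IncidenceAlgebra (ZMod 2) X) - 1) a b ≠ 0 := by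
        by_contra hno
        push_neg at hno
        exact hne (IncidenceAlgebra.ext fun a b _ => by
          rw [hno a b, IncidenceAlgebra.zero_apply])
      obtain ⟨a, b, hab0⟩ := hex
      have h1 := hu' a b hab0
      have h2 : (((2 ^ n : ℕ) : ℕ∞)) + 1 ≤ (insert b (Set.Ico a b)).chainHeight (· < ·) := by
        rw [Set.insert_eq, Set.union_comm]
        refine le_trans ?_ (IncAux.add_le_union _ _ fun y hy z hz => hz ▸ hy.2)
        exact add_le_add h1 ((Set.one_le_chainHeight_iff _ _).mpr (Set.singleton_nonempty b))
      have h3 : (insert b (Set.Ico a b)).chainHeight (· < ·) ≤ (Set.univ : Set X).chainHeight (· < ·) :=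
        Set.chainHeight_mono _ _ _ (Set.subset_univ _)
      have h4 := h2.trans (h3.trans hn)
      have h5 := (ENat.add_one_le_iff (ENat.coe_ne_top _)).mp h4
      exact lt_irrefl _ h5
    have hval : (u : IncidenceAlgebra (ZMod 2) X) = 1 := sub_eq_zero.mp hsub
    rw [Subgroup.mem_bot]
    exact Units.ext (by rw [hval, Units.val_one])
  have lower : ∀ n : ℕ, (((2 ^ n : ℕ) : ℕ∞)) < (Set.univ : Set X).chainHeight (· < ·) →
      derivedSeries (IncidenceAlgebra (ZMod 2) X)ˣ n ≠ ⊥ := by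
    intro n hn
    have hle : (((2 ^ n + 1 : ℕ)) : ℕ∞) ≤ (Set.univ : Set X).chainHeight (· < ·) := by
      rw [Nat.cast_add, Nat.cast_one]
      exact (ENat.add_one_le_iff (ENat.coe_ne_top _)).mpr hn
    obtain ⟨c, hlt⟩ := IncAux.exists_seq_of_le_chainHeight (2 ^ n) hle
    have hxy : c 0 < c (2 ^ n) :=
      IncAux.c_strict c hlt (2 ^ n) le_rfl 0 (Nat.two_pow_pos n)
    intro hbot
    have hmem := IncAux.chain_mem n (c 0) (c (2 ^ n)) hxy ⟨c, rfl, rfl, hlt⟩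
    rw [hbot, Subgroup.mem_bot] at hmem
    exact IncAux.EU_ne_one hxy hmem
  have htop : (Set.univ : Set X).chainHeight (· < ·) ≠ ⊤ := by
    intro ht
    exact lower n0 (ht ▸ ENat.coe_lt_top _) hn0
  obtain ⟨m, hm⟩ : ∃ m : ℕ, (Set.univ : Set X).chainHeight (· < ·) = (m : ℕ∞) :=
    ⟨_, (ENat.coe_toNat htop).symm⟩
  have hset : {n | derivedSeries (IncidenceAlgebra (ZMod 2) X)ˣ n = ⊥} = {n : ℕ | m ≤ 2 ^ n} := by
    ext n
    simp only [Set.mem_setOf_eq]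
    constructor
    · intro hd
      by_contra hmn
      push_neg at hmn
      exact lower n (by rw [hm]; exact_mod_cast hmn) hd
    · intro hmn
      exact upper n (by rw [hm]; exact_mod_cast hmn)
  rw [hset, hm]
  match m with
  | 0 =>
    have hls : sInf {n : ℕ | (0:ℕ) ≤ 2 ^ n} = 0 :=
      Nat.sInf_eq_zero.mpr (Or.inl (by simp))
    rw [hls]
    rw [show ((0:ℕ) : ℕ∞) - 1 = 0 from zero_tsub 1]
    rw [show (0 : ℕ∞).toNat = 0 from ENat.toNat_zero]
    rw [Nat.clog_one_right]
  | (k + 1) =>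
    have hco : ((((k + 1 : ℕ)) : ℕ∞) - 1).toNat = k := by
      rw [show ((1 : ℕ∞)) = (((1 : ℕ)) : ℕ∞) by exact_mod_cast rfl, ← ENat.coe_sub,
        ENat.toNat_coe]
      omega
    rw [hco]
    apply le_antisymm
    · exact Nat.sInf_le ((Nat.clog_le_iff_le_pow one_lt_two).mp le_rfl)
    · exact le_csInf ⟨Nat.clog 2 (k + 1), (Nat.clog_le_iff_le_pow one_lt_two).mp le_rfl⟩
        (fun b hb => (Nat.clog_le_iff_le_pow one_lt_two).mpr hb)
end
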